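/- arXiv:2405.12568 — 6 statements merged into one kernel-verified Lean document; each statement's English description precedes it below -/
import Mathlib

section
/- Let A = ∑_{n≥0} a_n X^n ∈ ℚ[[X]] where a_n := ∑_{k=0}^n (C(n,k))² (C(n+k,n))² are the Apéry numbers. Then, as an identity of formal power series, X²(1 − 34X + X²)A''' + X(3 − 153X + 6X²)A'' + (1 − 112X + 7X²)A' + (X − 5)A = 0, where ' denotes the formal derivative on ℚ[[X]]. -/
open Finset
namespace AperyODE

/-- summand of the Apéry number -/
def F (n k : ℕ) : ℚ := (n.choose k : ℚ) ^ 2 * ((n + k).choose k : ℚ) ^ 2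

/-- Apéry numbers -/
def ap (n : ℕ) : ℚ := ∑ k ∈ Finset.range (n + 1), F n k

/-- WZ certificate (shifted by one in `k`). -/
def g (n : ℕ) : ℕ → ℚ
  | 0 => 0
  | (k + 1) => 4 * (2 * (n:ℚ) + 1) * ((k:ℚ) * (2 * k + 1) - (2 * n + 1) ^ 2)
      * (n.choose k : ℚ) ^ 2 * ((n + k).choose k : ℚ) ^ 2


theorem localMain (m j : ℕ) (hj : j ≤ m) :
    ((m:ℚ) + 2) ^ 3 * F (m + 2) (j + 1)
      - (34 * ((m:ℚ) + 1) ^ 3 + 51 * ((m:ℚ) + 1) ^ 2 + 27 * ((m:ℚ) + 1) + 5) * F (m + 1) (j + 1)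
      + ((m:ℚ) + 1) ^ 3 * F m (j + 1)
      = g (m + 1) (j + 1 + 1) - g (m + 1) (j + 1) := by
  have hjq : (j : ℚ) ≤ (m : ℚ) := by exact_mod_cast hj
  have hne1 : (m : ℚ) + 1 - j ≠ 0 := by linarith
  have hne2 : (m : ℚ) + 2 ≠ 0 := by positivity
  have hne3 : (m : ℚ) + 1 ≠ 0 := by positivity
  have hne4 : (m : ℚ) + 2 + j ≠ 0 := by positivity
  set c : ℚ := ((m + 1).choose (j + 1) : ℚ) with hc
  set d : ℚ := ((m + 1 + (j + 1)).choose (j + 1) : ℚ) with hd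
  have h1 : ((m + 2).choose (j + 1) : ℚ) = ((m:ℚ) + 2) * c / ((m:ℚ) + 1 - j) := by
    rw [eq_div_iff hne1]
    have h := Nat.choose_mul_succ_eq (m + 1) (j + 1)
    have e : m + 1 + 1 - (j + 1) = m - j + 1 := by omega
    rw [e] at h
    qify at h
    push_cast at h ⊢
    have hmj : ((m - j : ℕ) : ℚ) = (m:ℚ) - j := by
      push_cast [Nat.cast_sub hj]; ring
    rw [hmj] at h
    linear_combination -h
  have h2 : ((m + 2 + (j + 1)).choose (j + 1) : ℚ) = ((m:ℚ) + 3 + j) * d / ((m:ℚ) + 2) := by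
    rw [eq_div_iff hne2]
    have h := Nat.choose_mul_succ_eq (m + 1 + (j + 1)) (j + 1)
    have e2 : m + 1 + (j + 1) + 1 - (j + 1) = m + 2 := by omega
    have e1 : m + 1 + (j + 1) + 1 = m + 2 + (j + 1) := by omega
    rw [e2, e1] at h
    qify at h
    push_cast at h ⊢
    linear_combination -h
  have h3 : (m.choose (j + 1) : ℚ) = ((m:ℚ) - j) * c / ((m:ℚ) + 1) := by
    rw [eq_div_iff hne3]
    have h := Nat.choose_mul_succ_eq m (j + 1)
    have e : m + 1 - (j + 1) = m - j := by omega
    rw [e] at h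
    qify at h
    push_cast at h ⊢
    have hmj : ((m - j : ℕ) : ℚ) = (m:ℚ) - j := by
      push_cast [Nat.cast_sub hj]; ring
    rw [hmj] at h
    linear_combination h
  have h4 : ((m + (j + 1)).choose (j + 1) : ℚ) = ((m:ℚ) + 1) * d / ((m:ℚ) + 2 + j) := by
    rw [eq_div_iff hne4]
    have h := Nat.choose_mul_succ_eq (m + (j + 1)) (j + 1)
    have e2 : m + (j + 1) + 1 - (j + 1) = m + 1 := by omega
    have e1 : m + (j + 1) + 1 = m + 1 + (j + 1) := by omega
    rw [e2, e1] at h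
    qify at h
    push_cast at h ⊢
    linear_combination h
  have h5 : ((m + 1).choose j : ℚ) = ((j:ℚ) + 1) * c / ((m:ℚ) + 1 - j) := by
    rw [eq_div_iff hne1]
    have h := Nat.choose_succ_right_eq (m + 1) j
    have e : m + 1 - j = m - j + 1 := by omega
    rw [e] at h
    qify at h
    push_cast at h ⊢
    have hmj : ((m - j : ℕ) : ℚ) = (m:ℚ) - j := by
      push_cast [Nat.cast_sub hj]; ring
    rw [hmj] at h
    linear_combination -h
  have h6 : ((m + 1 + j).choose j : ℚ) = ((j:ℚ) + 1) * d / ((m:ℚ) + 2 + j) := by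
    rw [eq_div_iff hne4]
    have h := Nat.add_one_mul_choose_eq (m + 1 + j) j
    have e : (m + 1 + j).succ = m + 1 + (j + 1) := by omega
    rw [show m + 1 + j + 1 = m + 1 + (j + 1) from by omega] at h
    qify at h
    push_cast at h ⊢
    linear_combination h
  simp only [F, g]
  rw [h1, h2, h3, h4, h5, h6]
  push_cast
  field_simp
  ring

theorem localZero (m : ℕ) :
    ((m:ℚ) + 2) ^ 3 * F (m + 2) 0
      - (34 * ((m:ℚ) + 1) ^ 3 + 51 * ((m:ℚ) + 1) ^ 2 + 27 * ((m:ℚ) + 1) + 5) * F (m + 1) 0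
      + ((m:ℚ) + 1) ^ 3 * F m 0
      = g (m + 1) (0 + 1) - g (m + 1) 0 := by
  simp only [F, g, Nat.choose_zero_right, Nat.add_zero, Nat.cast_one, Nat.cast_zero,
    Nat.cast_ofNat, Nat.cast_add]
  push_cast
  ring

theorem localTop (m : ℕ) :
    ((m:ℚ) + 2) ^ 3 * F (m + 2) (m + 1 + 1)
      - (34 * ((m:ℚ) + 1) ^ 3 + 51 * ((m:ℚ) + 1) ^ 2 + 27 * ((m:ℚ) + 1) + 5) * F (m + 1) (m + 1 + 1)
      + ((m:ℚ) + 1) ^ 3 * F m (m + 1 + 1)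
      = g (m + 1) (m + 1 + 1 + 1) - g (m + 1) (m + 1 + 1) := by
  have hz1 : (m + 1).choose (m + 1 + 1) = 0 := Nat.choose_eq_zero_of_lt (by omega)
  have hz2 : m.choose (m + 1 + 1) = 0 := Nat.choose_eq_zero_of_lt (by omega)
  have hkey := Nat.succ_mul_centralBinom_succ (m + 1)
  rw [Nat.centralBinom, Nat.centralBinom] at hkey
  qify at hkey
  have e1 : 2 * (m + 1 + 1) = m + 2 + (m + 1 + 1) := by omega
  have e2 : 2 * (m + 1) = m + 1 + (m + 1) := by omega
  rw [e1, e2] at hkey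
  simp only [F, g, hz1, hz2, Nat.choose_self]
  push_cast at hkey ⊢
  have hsucc : (m + 1 + 1 : ℕ) = m + 2 := by omega
  rw [hsucc]
  set X : ℚ := ((m + 2 + (m + 2)).choose (m + 2) : ℚ) with hX
  set Y : ℚ := ((m + 1 + (m + 1)).choose (m + 1) : ℚ) with hY
  linear_combination (((m:ℚ) + 2) * (((m:ℚ) + 2) * X + 2 * (2 * m + 3) * Y)) * hkey

theorem localAll (m k : ℕ) (hk : k ≤ m + 2) :
    ((m:ℚ) + 2) ^ 3 * F (m + 2) k
      - (34 * ((m:ℚ) + 1) ^ 3 + 51 * ((m:ℚ) + 1) ^ 2 + 27 * ((m:ℚ) + 1) + 5) * F (m + 1) k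
      + ((m:ℚ) + 1) ^ 3 * F m k
      = g (m + 1) (k + 1) - g (m + 1) k := by
  match k with
  | 0 => exact localZero m
  | (j + 1) =>
    rcases Nat.lt_or_ge j (m + 1) with h | h
    · exact localMain m j (by omega)
    · have : j = m + 1 := by omega
      subst this
      exact localTop m

theorem apRec (m : ℕ) :
    ((m:ℚ) + 2) ^ 3 * ap (m + 2)
      - (34 * ((m:ℚ) + 1) ^ 3 + 51 * ((m:ℚ) + 1) ^ 2 + 27 * ((m:ℚ) + 1) + 5) * ap (m + 1)
      + ((m:ℚ) + 1) ^ 3 * ap m = 0 := by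
  have tele : ∑ k ∈ range (m + 3), (g (m + 1) (k + 1) - g (m + 1) k)
      = g (m + 1) (m + 3) - g (m + 1) 0 := Finset.sum_range_sub _ _
  have hz : g (m + 1) (m + 3) = 0 := by
    rw [show m + 3 = (m + 2) + 1 by omega]
    simp [g, Nat.choose_eq_zero_of_lt (show m + 1 < m + 2 by omega)]
  have hsum : ∑ k ∈ range (m + 3),
      (((m:ℚ) + 2) ^ 3 * F (m + 2) k
        - (34 * ((m:ℚ) + 1) ^ 3 + 51 * ((m:ℚ) + 1) ^ 2 + 27 * ((m:ℚ) + 1) + 5) * F (m + 1) k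
        + ((m:ℚ) + 1) ^ 3 * F m k)
      = 0 := by
    rw [Finset.sum_congr rfl (fun k hk => localAll m k (by
      simp only [Finset.mem_range] at hk; omega)), tele, hz]
    simp [g]
  have expand : ∑ k ∈ range (m + 3),
      (((m:ℚ) + 2) ^ 3 * F (m + 2) k
        - (34 * ((m:ℚ) + 1) ^ 3 + 51 * ((m:ℚ) + 1) ^ 2 + 27 * ((m:ℚ) + 1) + 5) * F (m + 1) k
        + ((m:ℚ) + 1) ^ 3 * F m k)
      = ((m:ℚ) + 2) ^ 3 * (∑ k ∈ range (m + 3), F (m + 2) k)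
        - (34 * ((m:ℚ) + 1) ^ 3 + 51 * ((m:ℚ) + 1) ^ 2 + 27 * ((m:ℚ) + 1) + 5)
            * (∑ k ∈ range (m + 3), F (m + 1) k)
        + ((m:ℚ) + 1) ^ 3 * (∑ k ∈ range (m + 3), F m k) := by
    simp [Finset.sum_add_distrib, Finset.sum_sub_distrib, Finset.mul_sum]
  have s1 : ∑ k ∈ range (m + 3), F (m + 2) k = ap (m + 2) := by
    rw [ap]
  have s2 : ∑ k ∈ range (m + 3), F (m + 1) k = ap (m + 1) := by
    rw [show m + 3 = (m + 2) + 1 by omega, Finset.sum_range_succ, ap]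
    have : F (m + 1) (m + 2) = 0 := by
      simp [F, Nat.choose_eq_zero_of_lt (show m + 1 < m + 2 by omega)]
    rw [this, add_zero]
  have s3 : ∑ k ∈ range (m + 3), F m k = ap m := by
    rw [show m + 3 = (m + 2) + 1 by omega, Finset.sum_range_succ,
      show m + 2 = (m + 1) + 1 by omega, Finset.sum_range_succ, ap]
    have h1 : F m (m + 1) = 0 := by
      simp [F, Nat.choose_eq_zero_of_lt (show m < m + 1 by omega)]
    have h2 : F m (m + 1 + 1) = 0 := by
      simp [F, Nat.choose_eq_zero_of_lt (show m < m + 1 + 1 by omega)]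
    rw [h1, h2, add_zero, add_zero]
  rw [expand, s1, s2, s3] at hsum
  exact hsum

@[simp] theorem coeff_derivativeFun (f : PowerSeries ℚ) (n : ℕ) :
    PowerSeries.coeff n f.derivativeFun = PowerSeries.coeff (n + 1) f * (n + 1) :=
  PowerSeries.coeff_derivative f n

end AperyODE

open PowerSeries AperyODE

/-- The generating series of the Apéry numbers satisfies Apéry's third-order
differential equation, as an identity of formal power series over ℚ. -/
theorem apery_series_ODE :
    let a : ℕ → ℚ := fun n =>
      ∑ k ∈ Finset.range (n + 1), (n.choose k : ℚ) ^ 2 * ((n + k).choose n : ℚ) ^ 2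
    let A : PowerSeries ℚ := PowerSeries.mk a
    let D : PowerSeries ℚ → PowerSeries ℚ := PowerSeries.derivativeFun
    X ^ 2 * (1 - 34 * X + X ^ 2) * D (D (D A)) + X * (3 - 153 * X + 6 * X ^ 2) * D (D A)
        + (1 - 112 * X + 7 * X ^ 2) * D A + (X - 5) * A = 0 := by
  intro a A D
  have ha : a = ap := by
    funext i
    show (∑ k ∈ Finset.range (i + 1), (i.choose k : ℚ) ^ 2 * ((i + k).choose i : ℚ) ^ 2) = _
    rw [ap]
    refine Finset.sum_congr rfl fun k hk => ?_
    rw [F]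
    have hsymm := Nat.choose_symm (Nat.le_add_left k i)
    rw [Nat.add_sub_cancel] at hsymm
    rw [hsymm]
  have hA : A = PowerSeries.mk a := rfl
  have hD : D = PowerSeries.derivativeFun := rfl
  have expand : X ^ 2 * (1 - 34 * X + X ^ 2) * D (D (D A)) + X * (3 - 153 * X + 6 * X ^ 2) * D (D A)
        + (1 - 112 * X + 7 * X ^ 2) * D A + (X - 5) * A
      = X ^ 2 * D (D (D A)) - (34 : ℚ) • (X ^ 3 * D (D (D A))) + X ^ 4 * D (D (D A))
        + (3 : ℚ) • (X ^ 1 * D (D A)) - (153 : ℚ) • (X ^ 2 * D (D A)) + (6 : ℚ) • (X ^ 3 * D (D A))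
        + D A - (112 : ℚ) • (X ^ 1 * D A) + (7 : ℚ) • (X ^ 2 * D A)
        + X ^ 1 * A - (5 : ℚ) • A := by
    simp only [smul_eq_C_mul]
    have h34 : C (34 : ℚ) = (34 : ℚ⟦X⟧) := map_ofNat _ _
    have h3 : C (3 : ℚ) = (3 : ℚ⟦X⟧) := map_ofNat _ _
    have h153 : C (153 : ℚ) = (153 : ℚ⟦X⟧) := map_ofNat _ _
    have h6 : C (6 : ℚ) = (6 : ℚ⟦X⟧) := map_ofNat _ _
    have h112 : C (112 : ℚ) = (112 : ℚ⟦X⟧) := map_ofNat _ _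
    have h7 : C (7 : ℚ) = (7 : ℚ⟦X⟧) := map_ofNat _ _
    have h5 : C (5 : ℚ) = (5 : ℚ⟦X⟧) := map_ofNat _ _
    rw [h34, h3, h153, h6, h112, h7, h5]
    ring
  rw [expand, hD, hA, ha]
  ext n
  simp only [map_add, map_sub, map_smul, smul_eq_mul, map_zero]
  match n with
  | 0 =>
    simp only [coeff_X_pow_mul', coeff_derivativeFun, coeff_mk]
    norm_num [ap, F, Finset.sum_range_succ]
  | 1 =>
    simp only [coeff_X_pow_mul', coeff_derivativeFun, coeff_mk]
    norm_num
    linear_combination apRec 0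
  | 2 =>
    simp only [coeff_X_pow_mul', coeff_derivativeFun, coeff_mk]
    norm_num
    linear_combination apRec 1
  | 3 =>
    simp only [coeff_X_pow_mul', coeff_derivativeFun, coeff_mk]
    norm_num
    linear_combination apRec 2
  | (n + 4) =>
    have e1 : ∀ f : ℚ⟦X⟧, (coeff (n + 4)) (X ^ 1 * f) = coeff (n + 3) f := fun f => by
      rw [show n + 4 = (n + 3) + 1 from by omega, coeff_X_pow_mul]
    have e2 : ∀ f : ℚ⟦X⟧, (coeff (n + 4)) (X ^ 2 * f) = coeff (n + 2) f := fun f => by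
      rw [show n + 4 = (n + 2) + 2 from by omega, coeff_X_pow_mul]
    have e3 : ∀ f : ℚ⟦X⟧, (coeff (n + 4)) (X ^ 3 * f) = coeff (n + 1) f := fun f => by
      rw [show n + 4 = (n + 1) + 3 from by omega, coeff_X_pow_mul]
    have e4 : ∀ f : ℚ⟦X⟧, (coeff (n + 4)) (X ^ 4 * f) = coeff n f := fun f => by
      rw [show n + 4 = n + 4 from rfl, coeff_X_pow_mul]
    rw [e1, e1, e1, e2, e2, e2, e3, e3, e4]
    simp only [coeff_derivativeFun, coeff_mk]
    have i1 : (n+1+1 : ℕ) = n+2 := by omega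
    have i2 : (n+2+1 : ℕ) = n+3 := by omega
    have i3 : (n+3+1 : ℕ) = n+4 := by omega
    have i4 : (n+4+1 : ℕ) = n+5 := by omega
    simp only [i1, i2, i3, i4]
    have hr := apRec (n + 3)
    rw [show (n+3+2 : ℕ) = n+5 from by omega, show (n+3+1 : ℕ) = n+4 from by omega] at hr
    push_cast at hr ⊢
    linear_combination hr
end

section
/- The Apéry numbers a_n := ∑_{k=0}^n (C(n,k))² (C(n+k,n))² satisfy a_0 = 1, a_1 = 5, and the three-term recurrence (n+1)³ a_{n+1} − (34n³ + 51n² + 27n + 5) a_n + n³ a_{n−1} = 0 for every integer n ≥ 1. -/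
private def apF (n k : ℕ) : ℤ := ((n.choose k : ℤ))^2 * (((n+k).choose k : ℤ))^2

private def apC (n k : ℕ) : ℤ :=
  4*(2*(n:ℤ)+1)*(2*(k:ℤ)^2+(k:ℤ)-(2*(n:ℤ)+1)^2)

private lemma masterZ (m k : ℕ) :
    ((m:ℤ) + 1 - k) * (((m+1).choose k : ℤ)) = ((m:ℤ)+1) * ((m.choose k : ℤ)) := by
  rcases le_or_gt k (m+1) with h | h
  · have hnat := Nat.choose_mul_succ_eq m k
    have hcast : ((m.choose k * (m + 1) : ℕ) : ℤ) = (((m+1).choose k * (m + 1 - k) : ℕ) : ℤ) := by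
      exact_mod_cast congrArg (Nat.cast (R := ℤ)) hnat
    push_cast [Nat.cast_sub h] at hcast
    linarith [hcast]
  · rw [Nat.choose_eq_zero_of_lt h, Nat.choose_eq_zero_of_lt (by omega)]
    simp

private lemma masterB (m k : ℕ) :
    ((k:ℤ) + 1) * ((m.choose (k+1) : ℤ)) = ((m:ℤ) - k) * ((m.choose k : ℤ)) := by
  rcases le_or_gt k m with h | h
  · have hnat := Nat.choose_succ_right_eq m k
    have hcast : ((m.choose (k+1) * (k+1) : ℕ) : ℤ) = ((m.choose k * (m - k) : ℕ) : ℤ) := by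
      exact_mod_cast congrArg (Nat.cast (R := ℤ)) hnat
    push_cast [Nat.cast_sub h] at hcast
    linarith [hcast]
  · rw [Nat.choose_eq_zero_of_lt (by omega), Nat.choose_eq_zero_of_lt h]
    simp

private lemma succZ (m k : ℕ) :
    ((k:ℤ) + 1) * (((m+1).choose (k+1) : ℤ)) = ((m:ℤ)+1) * ((m.choose k : ℤ)) := by
  have hnat := Nat.add_one_mul_choose_eq m k
  have hcast : (((m+1) * m.choose k : ℕ) : ℤ) = (((m+1).choose (k+1) * (k+1) : ℕ) : ℤ) := by
    exact_mod_cast congrArg (Nat.cast (R := ℤ)) hnat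
  push_cast at hcast
  linarith [hcast]

private lemma loc (m k : ℕ) :
    ((m:ℤ)+2)^3 * apF (m+2) (k+1)
      - (34*((m:ℤ)+1)^3+51*((m:ℤ)+1)^2+27*((m:ℤ)+1)+5) * apF (m+1) (k+1)
      + ((m:ℤ)+1)^3 * apF m (k+1)
    = apC (m+1) (k+1) * apF (m+1) (k+1) - apC (m+1) k * apF (m+1) k := by
  have hM : (((m:ℤ)+1)^2*((m:ℤ)+2)^2*((k:ℤ)+1)^4) ≠ 0 := by positivity
  apply mul_left_cancel₀ hM
  simp only [apF, apC]
  rw [show m+2+(k+1) = m+k+3 by omega, show m+1+(k+1) = m+k+2 by omega,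
      show m+(k+1) = m+k+1 by omega, show m+1+k = m+k+1 by omega]
  have R1 : ((k:ℤ)+1) * (((m+2).choose (k+1) : ℤ)) = ((m:ℤ)+2) * (((m+1).choose k : ℤ)) := by
    have h := succZ (m+1) k
    rw [show m+1+1 = m+2 by omega] at h
    push_cast at h
    linarith [h]
  have R2 : ((m:ℤ)+2)*((k:ℤ)+1) * (((m+k+3).choose (k+1) : ℤ))
      = ((m:ℤ)+(k:ℤ)+3)*((m:ℤ)+(k:ℤ)+2) * (((m+k+1).choose k : ℤ)) := by
    have h1 := masterZ (m+k+2) (k+1)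
    have h2 := succZ (m+k+1) k
    rw [show m+k+2+1 = m+k+3 by omega] at h1
    rw [show m+k+1+1 = m+k+2 by omega] at h2
    push_cast at h1 h2
    linear_combination ((k:ℤ)+1)*h1 + ((m:ℤ)+(k:ℤ)+3)*h2
  have R5 : ((k:ℤ)+1) * (((m+1).choose (k+1) : ℤ)) = ((m:ℤ)+1-(k:ℤ)) * (((m+1).choose k : ℤ)) := by
    have h := masterB (m+1) k
    push_cast at h
    linear_combination h
  have R3 : ((m:ℤ)+1)*((k:ℤ)+1) * ((m.choose (k+1) : ℤ))
      = ((m:ℤ)-(k:ℤ))*((m:ℤ)+1-(k:ℤ)) * (((m+1).choose k : ℤ)) := by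
    have h := masterZ m (k+1)
    push_cast at h
    linear_combination (-((k:ℤ)+1))*h + ((m:ℤ)-(k:ℤ))*R5
  have R4 : ((k:ℤ)+1) * (((m+k+1).choose (k+1) : ℤ)) = ((m:ℤ)+1) * (((m+k+1).choose k : ℤ)) := by
    have h := masterB (m+k+1) k
    push_cast at h
    linear_combination h
  have R6 : ((k:ℤ)+1) * (((m+k+2).choose (k+1) : ℤ))
      = ((m:ℤ)+(k:ℤ)+2) * (((m+k+1).choose k : ℤ)) := by
    have h := succZ (m+k+1) k
    rw [show m+k+1+1 = m+k+2 by omega] at h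
    push_cast at h
    linear_combination h
  push_cast
  linear_combination
    (((m:ℤ)+2)^3*((m:ℤ)+1)^2*((m:ℤ)+2)^2*((k:ℤ)+1)^2*(((m+k+3).choose (k+1) : ℤ))^2
      * (((k:ℤ)+1)*(((m+2).choose (k+1) : ℤ)) + ((m:ℤ)+2)*(((m+1).choose k : ℤ)))) * R1
    + (((m:ℤ)+2)^3*((m:ℤ)+1)^2*((m:ℤ)+2)^2*(((m+1).choose k : ℤ))^2
      * (((m:ℤ)+2)*((k:ℤ)+1)*(((m+k+3).choose (k+1) : ℤ))
         + ((m:ℤ)+(k:ℤ)+3)*((m:ℤ)+(k:ℤ)+2)*(((m+k+1).choose k : ℤ)))) * R2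
    + ((-(34*((m:ℤ)+1)^3+51*((m:ℤ)+1)^2+27*((m:ℤ)+1)+5)
        - (4*(2*((m:ℤ)+1)+1)*(2*((k:ℤ)+1)^2+((k:ℤ)+1)-(2*((m:ℤ)+1)+1)^2)))
       *((m:ℤ)+1)^2*((m:ℤ)+2)^2*((k:ℤ)+1)^2*(((m+k+2).choose (k+1) : ℤ))^2
      * (((k:ℤ)+1)*(((m+1).choose (k+1) : ℤ)) + ((m:ℤ)+1-(k:ℤ))*(((m+1).choose k : ℤ)))) * R5
    + ((-(34*((m:ℤ)+1)^3+51*((m:ℤ)+1)^2+27*((m:ℤ)+1)+5)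
        - (4*(2*((m:ℤ)+1)+1)*(2*((k:ℤ)+1)^2+((k:ℤ)+1)-(2*((m:ℤ)+1)+1)^2)))
       *((m:ℤ)+1)^2*((m:ℤ)+2)^2*((m:ℤ)+1-(k:ℤ))^2*(((m+1).choose k : ℤ))^2
      * (((k:ℤ)+1)*(((m+k+2).choose (k+1) : ℤ)) + ((m:ℤ)+(k:ℤ)+2)*(((m+k+1).choose k : ℤ)))) * R6
    + (((m:ℤ)+1)^3*((m:ℤ)+2)^2*((k:ℤ)+1)^2*(((m+k+1).choose (k+1) : ℤ))^2
      * (((m:ℤ)+1)*((k:ℤ)+1)*((m.choose (k+1) : ℤ))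
         + ((m:ℤ)-(k:ℤ))*((m:ℤ)+1-(k:ℤ))*(((m+1).choose k : ℤ)))) * R3
    + (((m:ℤ)+1)^3*((m:ℤ)+2)^2*((m:ℤ)-(k:ℤ))^2*((m:ℤ)+1-(k:ℤ))^2*(((m+1).choose k : ℤ))^2
      * (((k:ℤ)+1)*(((m+k+1).choose (k+1) : ℤ)) + ((m:ℤ)+1)*(((m+k+1).choose k : ℤ)))) * R4

private lemma loc0 (m : ℕ) :
    ((m:ℤ)+2)^3 * apF (m+2) 0
      - (34*((m:ℤ)+1)^3+51*((m:ℤ)+1)^2+27*((m:ℤ)+1)+5) * apF (m+1) 0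
      + ((m:ℤ)+1)^3 * apF m 0
    = apC (m+1) 0 * apF (m+1) 0 := by
  simp only [apF, apC, Nat.choose_zero_right, Nat.add_zero]
  push_cast
  ring

private lemma apF_zero_of_lt {n k : ℕ} (h : n < k) : apF n k = 0 := by
  simp [apF, Nat.choose_eq_zero_of_lt h]

private lemma tele (m : ℕ) :
    (((m:ℤ)+2)^3 * ∑ k ∈ Finset.range (m+3), apF (m+2) k)
      - (34*((m:ℤ)+1)^3+51*((m:ℤ)+1)^2+27*((m:ℤ)+1)+5) * (∑ k ∈ Finset.range (m+3), apF (m+1) k)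
      + ((m:ℤ)+1)^3 * (∑ k ∈ Finset.range (m+3), apF m k) = 0 := by
  rw [Finset.mul_sum, Finset.mul_sum, Finset.mul_sum, ← Finset.sum_sub_distrib,
      ← Finset.sum_add_distrib]
  rw [show m+3 = (m+2)+1 by omega, Finset.sum_range_succ']
  have hc : ∀ i ∈ Finset.range (m+2),
      (((m:ℤ)+2)^3 * apF (m+2) (i+1)
        - (34*((m:ℤ)+1)^3+51*((m:ℤ)+1)^2+27*((m:ℤ)+1)+5) * apF (m+1) (i+1)
        + ((m:ℤ)+1)^3 * apF m (i+1))
      = apC (m+1) (i+1) * apF (m+1) (i+1) - apC (m+1) i * apF (m+1) i :=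
    fun i _ => loc m i
  rw [Finset.sum_congr rfl hc,
      Finset.sum_range_sub (fun i => apC (m+1) i * apF (m+1) i)]
  have hz : apF (m+1) (m+2) = 0 := apF_zero_of_lt (by omega)
  have h0 := loc0 m
  linear_combination apC (m+1) (m+2) * hz + h0

/-- The Apéry numbers satisfy `a₀ = 1`, `a₁ = 5` and the three-term recurrence
`(n+1)³ a_{n+1} − (34n³ + 51n² + 27n + 5) a_n + n³ a_{n−1} = 0` for `n ≥ 1`. -/
theorem apery_recurrence :
    let a : ℕ → ℤ := fun n =>
      ∑ k ∈ Finset.range (n + 1), (n.choose k : ℤ) ^ 2 * ((n + k).choose n : ℤ) ^ 2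
    a 0 = 1 ∧ a 1 = 5 ∧
      ∀ n : ℕ, 1 ≤ n →
        ((n : ℤ) + 1) ^ 3 * a (n + 1)
            - (34 * (n : ℤ) ^ 3 + 51 * (n : ℤ) ^ 2 + 27 * (n : ℤ) + 5) * a n
            + (n : ℤ) ^ 3 * a (n - 1) = 0 := by
  intro a
  have hsym : ∀ N k : ℕ, (N+k).choose N = (N+k).choose k := by
    intro N k
    have h := Nat.choose_symm (Nat.le_add_right k N)
    rw [show k+N-k = N by omega] at h
    rw [show N+k = k+N by omega]
    exact h
  have ha : ∀ N, a N = ∑ k ∈ Finset.range (N+1), apF N k := by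
    intro N
    show (∑ k ∈ Finset.range (N + 1), ((N.choose k : ℤ))^2 * (((N + k).choose N : ℤ))^2) = _
    refine Finset.sum_congr rfl fun k _ => ?_
    rw [apF, hsym]
  refine ⟨?_, ?_, ?_⟩
  · rw [ha]
    simp [apF]
  · rw [ha]
    simp [apF, Finset.sum_range_succ, Nat.choose_one_right]
  · intro n hn
    obtain ⟨m, rfl⟩ : ∃ m, n = m + 1 := ⟨n - 1, by omega⟩
    rw [show m+1+1 = m+2 by omega, show m+1-1 = m by omega, ha, ha, ha]
    have e2 : (∑ k ∈ Finset.range (m+3), apF (m+1) k)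
        = ∑ k ∈ Finset.range (m+1+1), apF (m+1) k := by
      rw [show m+3 = (m+1+1)+1 by omega, Finset.sum_range_succ,
          apF_zero_of_lt (show m+1 < m+1+1 by omega), add_zero]
    have e3 : (∑ k ∈ Finset.range (m+3), apF m k)
        = ∑ k ∈ Finset.range (m+1), apF m k := by
      rw [show m+3 = ((m+1)+1)+1 by omega, Finset.sum_range_succ, Finset.sum_range_succ,
          apF_zero_of_lt (show m < m+1 by omega),
          apF_zero_of_lt (show m < (m+1)+1 by omega), add_zero, add_zero]
    have t := tele m
    rw [show m+3 = (m+2)+1 by omega] at t e2 e3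
    push_cast
    linear_combination t
      + (34*((m:ℤ)+1)^3+51*((m:ℤ)+1)^2+27*((m:ℤ)+1)+5) * e2
      - ((m:ℤ)+1)^3 * e3
end

section
/- Let A = ∑_{n≥0} a_n X^n ∈ ℚ[[X]] where a_n := ∑_{k=0}^n (C(n,k))² (C(n+k,n))² are the Apéry numbers. Then there exists a formal power series β ∈ ℚ[[X]] with constant coefficient β(0) = 1 and coefficient of X equal to 5/2, such that X(X² − 34X + 1)β'' + (2X² − 51X + 1)β' + (1/4)(X − 10)β = 0 as formal power series, and such that β² = A in ℚ[[X]]. -/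
open PowerSeries

open Finset

/-- Apéry summand. -/
private def FF (n k : ℕ) : ℚ := (n.choose k : ℚ)^2 * ((n+k).choose k : ℚ)^2

/-- WZ certificate (at middle index n+1), H n 0 = 0. -/
private def HH (n : ℕ) : ℕ → ℚ
  | 0 => 0
  | (k+1) => ((n+1).choose k : ℚ)^2 * ((n+1+k).choose k : ℚ)^2 * 4*(2*(n:ℚ)+3) *
      (2*((k:ℚ)+1)^2 - 3*((k:ℚ)+1) - 4*((n:ℚ)+1)*((n:ℚ)+2))

-- cast ratio lemma 1: C(m+1,k)*(m+1-k) = C(m,k)*(m+1), stated without subtraction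
private lemma ratio1 (k d : ℕ) :
    ((k+d+1).choose k : ℚ) * (d+1) = ((k+d).choose k : ℚ) * (k+d+1) := by
  have h := Nat.choose_mul_succ_eq (k+d) k
  rw [show k+d+1-k = d+1 by omega] at h
  exact_mod_cast (by exact_mod_cast h.symm)

-- choose_succ_right_eq: C(m, j+1)*(j+1) = C(m,j)*(m-j)
private lemma ratio2 (m j : ℕ) (h : j ≤ m) :
    (m.choose (j+1) : ℚ) * (j+1) = (m.choose j : ℚ) * ((m:ℚ) - j) := by
  have h2 := Nat.choose_succ_right_eq m j
  have h3 : ((m - j : ℕ) : ℚ) = (m:ℚ) - j := by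
    push_cast [Nat.cast_sub h]; ring
  calc (m.choose (j+1) : ℚ) * (j+1) = ((m.choose (j+1) * (j+1) : ℕ) : ℚ) := by push_cast; ring
    _ = ((m.choose j * (m - j) : ℕ) : ℚ) := by rw [h2]
    _ = (m.choose j : ℚ) * ((m:ℚ) - j) := by push_cast [Nat.cast_sub h]; ring

private lemma pnt_main (j d : ℕ) :
    ((j:ℚ)+d+3)^3 * FF (j+1+d+2) (j+1)
      - (34*((j:ℚ)+d+2)^3+51*((j:ℚ)+d+2)^2+27*((j:ℚ)+d+2)+5) * FF (j+1+d+1) (j+1)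
      + ((j:ℚ)+d+2)^3 * FF (j+1+d) (j+1)
    = HH (j+1+d) (j+2) - HH (j+1+d) (j+1) := by
  have e1 : ((j+d+2).choose (j+1) : ℚ) * ((d:ℚ)+1)
      = ((j+d+1).choose (j+1) : ℚ) * ((j:ℚ)+d+2) := by
    have h := ratio1 (j+1) d
    simp only [show j+1+d+1 = j+d+2 from by omega, show j+1+d = j+d+1 from by omega] at h
    push_cast at h ⊢; linarith
  have e2 : ((j+d+3).choose (j+1) : ℚ) * ((d:ℚ)+2)
      = ((j+d+2).choose (j+1) : ℚ) * ((j:ℚ)+d+3) := by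
    have h := ratio1 (j+1) (d+1)
    simp only [show j+1+(d+1)+1 = j+d+3 from by omega,
      show j+1+(d+1) = j+d+2 from by omega] at h
    push_cast at h ⊢; linarith
  have e3 : ((2*j+d+3).choose (j+1) : ℚ) * ((j:ℚ)+d+2)
      = ((2*j+d+2).choose (j+1) : ℚ) * (2*(j:ℚ)+d+3) := by
    have h := ratio1 (j+1) (j+1+d)
    simp only [show j+1+(j+1+d)+1 = 2*j+d+3 from by omega,
      show j+1+(j+1+d) = 2*j+d+2 from by omega] at h
    push_cast at h ⊢; linarith
  have e4 : ((2*j+d+4).choose (j+1) : ℚ) * ((j:ℚ)+d+3)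
      = ((2*j+d+3).choose (j+1) : ℚ) * (2*(j:ℚ)+d+4) := by
    have h := ratio1 (j+1) (j+1+d+1)
    simp only [show j+1+(j+1+d+1)+1 = 2*j+d+4 from by omega,
      show j+1+(j+1+d+1) = 2*j+d+3 from by omega] at h
    push_cast at h ⊢; linarith
  have e5 : ((j+d+2).choose (j+1) : ℚ) * ((j:ℚ)+1)
      = ((j+d+2).choose j : ℚ) * ((d:ℚ)+2) := by
    have h := ratio2 (j+d+2) j (by omega)
    push_cast at h ⊢; linarith
  have e6 : ((2*j+d+2).choose (j+1) : ℚ) * ((j:ℚ)+1)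
      = ((2*j+d+2).choose j : ℚ) * ((j:ℚ)+d+2) := by
    have h := ratio2 (2*j+d+2) j (by omega)
    push_cast at h ⊢; linarith
  simp only [FF, HH]
  simp only [show j+1+d = j+d+1 from by omega, show j+1+d+1 = j+d+2 from by omega,
    show j+1+d+2 = j+d+3 from by omega, show j+d+1+(j+1) = 2*j+d+2 from by omega,
    show j+d+2+(j+1) = 2*j+d+3 from by omega, show j+d+3+(j+1) = 2*j+d+4 from by omega,
    show j+d+1+1 = j+d+2 from by omega, show j+d+1+1+j = 2*j+d+2 from by omega,
    show j+d+1+1+(j+1) = 2*j+d+3 from by omega]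
  push_cast
  set a1 := ((j+d+1).choose (j+1) : ℚ)
  set a2 := ((j+d+2).choose (j+1) : ℚ)
  set a3 := ((j+d+3).choose (j+1) : ℚ)
  set b1 := ((2*j+d+2).choose (j+1) : ℚ)
  set b2 := ((2*j+d+3).choose (j+1) : ℚ)
  set b3 := ((2*j+d+4).choose (j+1) : ℚ)
  set a0 := ((j+d+2).choose j : ℚ)
  set b0 := ((2*j+d+2).choose j : ℚ)
  have hd1 : ((d:ℚ)+1) ≠ 0 := by positivity
  have hd2 : ((d:ℚ)+2) ≠ 0 := by positivity
  have hjd2 : ((j:ℚ)+d+2) ≠ 0 := by positivity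
  have hjd3 : ((j:ℚ)+d+3) ≠ 0 := by positivity
  have ha2 : a2 = a1*((j:ℚ)+d+2)/((d:ℚ)+1) := by rw [eq_div_iff hd1]; linarith
  have ha3 : a3 = a2*((j:ℚ)+d+3)/((d:ℚ)+2) := by rw [eq_div_iff hd2]; linarith
  have hb2 : b2 = b1*(2*(j:ℚ)+d+3)/((j:ℚ)+d+2) := by rw [eq_div_iff hjd2]; linarith
  have hb3 : b3 = b2*(2*(j:ℚ)+d+4)/((j:ℚ)+d+3) := by rw [eq_div_iff hjd3]; linarith
  have ha0 : a0 = a2*((j:ℚ)+1)/((d:ℚ)+2) := by rw [eq_div_iff hd2]; linarith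
  have hb0 : b0 = b1*((j:ℚ)+1)/((j:ℚ)+d+2) := by rw [eq_div_iff hjd2]; linarith
  rw [ha3, hb3, ha0, hb0, ha2, hb2]
  field_simp
  ring

-- case k = 0
private lemma PNT0 (n : ℕ) :
    ((n:ℚ)+2)^3 * FF (n+2) 0
      - (34*((n:ℚ)+1)^3+51*((n:ℚ)+1)^2+27*((n:ℚ)+1)+5) * FF (n+1) 0
      + ((n:ℚ)+1)^3 * FF n 0
    = HH n 1 - HH n 0 := by
  simp only [FF, HH, Nat.choose_zero_right, Nat.add_zero]
  push_cast
  ring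

-- case k = n+1
private lemma PNT1 (n : ℕ) :
    ((n:ℚ)+2)^3 * FF (n+2) (n+1)
      - (34*((n:ℚ)+1)^3+51*((n:ℚ)+1)^2+27*((n:ℚ)+1)+5) * FF (n+1) (n+1)
      + ((n:ℚ)+1)^3 * FF n (n+1)
    = HH n (n+2) - HH n (n+1) := by
  have e1 : ((2*n+2).choose (n+1) : ℚ) * ((n:ℚ)+1) = ((2*n+1).choose n : ℚ) * (2*(n:ℚ)+2) := by
    have h := Nat.add_one_mul_choose_eq (2*n+1) n
    rw [show 2*n+1+1 = 2*n+2 from rfl] at h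
    have h' := congrArg (Nat.cast : ℕ → ℚ) h
    push_cast at h'; linarith
  have e2 : ((2*n+3).choose (n+1) : ℚ) * ((n:ℚ)+2) = ((2*n+2).choose (n+1) : ℚ) * (2*(n:ℚ)+3) := by
    have h := Nat.choose_mul_succ_eq (2*n+2) (n+1)
    rw [show 2*n+2+1 = 2*n+3 from by omega, show 2*n+2+1-(n+1) = n+2 from by omega] at h
    have h' := congrArg (Nat.cast : ℕ → ℚ) h
    push_cast at h'; linarith
  simp only [FF, HH]
  simp only [show n+2+(n+1) = 2*n+3 from by omega, show n+1+(n+1) = 2*n+2 from by omega,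
    show n+(n+1) = 2*n+1 from by omega, show n+1+1 = n+2 from by omega,
    show n+1+n = 2*n+1 from by omega,
    Nat.choose_succ_self_right, Nat.choose_self, Nat.choose_succ_self,
    Nat.choose_symm_half]
  push_cast
  set t := ((2*n+2).choose (n+1) : ℚ)
  set u := ((2*n+3).choose (n+1) : ℚ)
  set v := ((2*n+1).choose n : ℚ)
  have hn1 : ((n:ℚ)+1) ≠ 0 := by positivity
  have hn2 : ((n:ℚ)+2) ≠ 0 := by positivity
  have hu : u = t*(2*(n:ℚ)+3)/((n:ℚ)+2) := by rw [eq_div_iff hn2]; linarith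
  have hv : v = t*((n:ℚ)+1)/(2*(n:ℚ)+2) := by
    rw [eq_div_iff (by positivity)]; linarith
  rw [hu, hv]
  field_simp
  ring

-- case k = n+2
private lemma PNT2 (n : ℕ) :
    ((n:ℚ)+2)^3 * FF (n+2) (n+2)
      - (34*((n:ℚ)+1)^3+51*((n:ℚ)+1)^2+27*((n:ℚ)+1)+5) * FF (n+1) (n+2)
      + ((n:ℚ)+1)^3 * FF n (n+2)
    = HH n (n+3) - HH n (n+2) := by
  have e1 : ((2*n+2).choose (n+1) : ℚ) * (2*(n:ℚ)+3) = ((2*n+3).choose (n+1) : ℚ) * ((n:ℚ)+2) := by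
    have h := Nat.choose_mul_succ_eq (2*n+2) (n+1)
    rw [show 2*n+2+1 = 2*n+3 from by omega, show 2*n+2+1-(n+1) = n+2 from by omega] at h
    have h' := congrArg (Nat.cast : ℕ → ℚ) h
    push_cast at h'; linarith
  have e2 : (2*(n:ℚ)+4) * ((2*n+3).choose (n+1) : ℚ) = ((2*n+4).choose (n+2) : ℚ) * ((n:ℚ)+2) := by
    have h := Nat.add_one_mul_choose_eq (2*n+3) (n+1)
    have h2 : ((2*n+3+1) * (2*n+3).choose (n+1) : ℕ) = ((2*n+4).choose (n+2) * (n+2) : ℕ) := by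
      exact_mod_cast h
    have h' := congrArg (Nat.cast : ℕ → ℚ) h2
    push_cast at h'; linarith
  simp only [FF, HH]
  simp only [show n+2+(n+2) = 2*n+4 from by omega, show n+1+(n+2) = 2*n+3 from by omega,
    show n+1+(n+1) = 2*n+2 from by omega, show n+2+1 = n+3 from by omega,
    show n+1+2 = n+3 from by omega,
    Nat.choose_self, Nat.choose_succ_self, Nat.choose_succ_self_right]
  rw [Nat.choose_eq_zero_of_lt (show n < n+2 by omega)]
  push_cast
  set t := ((2*n+2).choose (n+1) : ℚ)
  set u := ((2*n+3).choose (n+1) : ℚ)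
  set w := ((2*n+4).choose (n+2) : ℚ)
  have hn2 : ((n:ℚ)+2) ≠ 0 := by positivity
  have hu : u = t*(2*(n:ℚ)+3)/((n:ℚ)+2) := by rw [eq_div_iff hn2]; linarith
  have hw : w = (2*(n:ℚ)+4)*u/((n:ℚ)+2) := by rw [eq_div_iff hn2]; linarith
  rw [hw, hu]
  field_simp
  ring


private lemma pnt (n k : ℕ) :
    ((n:ℚ)+2)^3 * FF (n+2) k
      - (34*((n:ℚ)+1)^3+51*((n:ℚ)+1)^2+27*((n:ℚ)+1)+5) * FF (n+1) k
      + ((n:ℚ)+1)^3 * FF n k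
    = HH n (k+1) - HH n k := by
  rcases Nat.lt_or_ge k (n+3) with hk | hk
  · rcases k with _ | j
    · exact PNT0 n
    · rcases Nat.lt_or_ge j n with hj | hj
      · -- 1 ≤ k ≤ n
        obtain ⟨d, rfl⟩ : ∃ d, n = j+1+d := ⟨n-(j+1), by omega⟩
        have h := pnt_main j d
        push_cast at h ⊢
        linear_combination h
      · -- j = n or j = n+1
        rcases Nat.lt_or_ge j (n+1) with hj2 | hj2
        · have hjn : j = n := by omega
          subst hjn
          exact PNT1 j
        · have hjn : j = n+1 := by omega
          subst hjn
          exact PNT2 n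
  · -- k ≥ n+3 : everything vanishes
    obtain ⟨m, rfl⟩ : ∃ m, k = n+3+m := ⟨k-(n+3), by omega⟩
    have z1 : FF (n+2) (n+3+m) = 0 := by
      simp [FF, Nat.choose_eq_zero_of_lt (show n+2 < n+3+m by omega)]
    have z2 : FF (n+1) (n+3+m) = 0 := by
      simp [FF, Nat.choose_eq_zero_of_lt (show n+1 < n+3+m by omega)]
    have z3 : FF n (n+3+m) = 0 := by
      simp [FF, Nat.choose_eq_zero_of_lt (show n < n+3+m by omega)]
    have z4 : HH n (n+3+m) = 0 := by
      rw [show n+3+m = (n+2+m)+1 from by omega]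
      simp [HH, Nat.choose_eq_zero_of_lt (show n+1 < n+2+m by omega)]
    have z5 : HH n (n+3+m+1) = 0 := by
      rw [show n+3+m+1 = (n+3+m)+1 from rfl]
      simp [HH, Nat.choose_eq_zero_of_lt (show n+1 < n+3+m by omega)]
    rw [z1, z2, z3, z4, z5]; ring

private def ap (n : ℕ) : ℚ := ∑ k ∈ Finset.range (n+1), FF n k

private lemma arec (n : ℕ) :
    ((n:ℚ)+2)^3 * ap (n+2)
      = (34*((n:ℚ)+1)^3+51*((n:ℚ)+1)^2+27*((n:ℚ)+1)+5) * ap (n+1) - ((n:ℚ)+1)^3 * ap n := by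
  have key : ∑ k ∈ Finset.range (n+3),
      (((n:ℚ)+2)^3 * FF (n+2) k
        - (34*((n:ℚ)+1)^3+51*((n:ℚ)+1)^2+27*((n:ℚ)+1)+5) * FF (n+1) k
        + ((n:ℚ)+1)^3 * FF n k)
      = HH n (n+3) - HH n 0 := by
    rw [← Finset.sum_range_sub (HH n) (n+3)]
    exact Finset.sum_congr rfl fun k _ => pnt n k
  have hend : HH n (n+3) = 0 := by
    rw [show n+3 = (n+2)+1 from rfl]
    simp [HH, Nat.choose_eq_zero_of_lt (show n+1 < n+2 by omega)]
  have h0 : HH n 0 = 0 := rfl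
  rw [hend, h0, sub_zero] at key
  have s1 : ∑ k ∈ Finset.range (n+3), FF (n+2) k = ap (n+2) := rfl
  have s2 : ∑ k ∈ Finset.range (n+3), FF (n+1) k = ap (n+1) := by
    rw [Finset.sum_range_succ]
    simp [ap, FF, Nat.choose_eq_zero_of_lt (show n+1 < n+2 by omega)]
  have s3 : ∑ k ∈ Finset.range (n+3), FF n k = ap n := by
    rw [Finset.sum_range_succ, Finset.sum_range_succ]
    simp [ap, FF, Nat.choose_eq_zero_of_lt (show n < n+1 by omega),
      Nat.choose_eq_zero_of_lt (show n < n+2 by omega)]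
  rw [Finset.sum_add_distrib, Finset.sum_sub_distrib, ← Finset.mul_sum, ← Finset.mul_sum,
    ← Finset.mul_sum, s1, s2, s3] at key
  linarith

private def bb : ℕ → ℚ
  | 0 => 1
  | 1 => 5/2
  | (n+2) => ((34*((n:ℚ)+1)^2+17*((n:ℚ)+1)+5/2) * bb (n+1) - ((n:ℚ)+1/2)^2 * bb n)
      / ((n:ℚ)+2)^2

private noncomputable def β : ℚ⟦X⟧ := PowerSeries.mk bb

private noncomputable def DD : ℚ⟦X⟧ → ℚ⟦X⟧ := derivativeFun

private lemma DD_eq (f : ℚ⟦X⟧) : DD f = d⁄dX ℚ f := rfl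

private lemma coeff_DD (f : ℚ⟦X⟧) (n : ℕ) :
    coeff n (DD f) = coeff (n+1) f * (n+1) := coeff_derivativeFun f n

private lemma hL2 : X * (X ^ 2 - 34 * X + 1) * DD (DD β) + (2 * X ^ 2 - 51 * X + 1) * DD β
    + PowerSeries.C (1 / 4 : ℚ) * (X - 10) * β = 0 := by
  have hc : PowerSeries.C (1/4:ℚ) * PowerSeries.C (10:ℚ) = PowerSeries.C (5/2:ℚ) := by
    rw [← map_mul]; norm_num
  have h34 : (34:ℚ⟦X⟧) = C (34:ℚ) := (map_ofNat (C (R := ℚ)) 34).symm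
  have h2 : (2:ℚ⟦X⟧) = C (2:ℚ) := (map_ofNat (C (R := ℚ)) 2).symm
  have h51 : (51:ℚ⟦X⟧) = C (51:ℚ) := (map_ofNat (C (R := ℚ)) 51).symm
  have h10 : (10:ℚ⟦X⟧) = C (10:ℚ) := (map_ofNat (C (R := ℚ)) 10).symm
  have hnf : X * (X ^ 2 - 34 * X + 1) * DD (DD β) + (2 * X ^ 2 - 51 * X + 1) * DD β
      + PowerSeries.C (1 / 4 : ℚ) * (X - 10) * β
      = X^3 * DD (DD β) - C (34:ℚ) * (X^2 * DD (DD β)) + X^1 * DD (DD β)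
        + C (2:ℚ) * (X^2 * DD β) - C (51:ℚ) * (X^1 * DD β) + DD β
        + C (1/4:ℚ) * (X^1 * β) - C (5/2:ℚ) * β := by
    rw [← hc, h34, h2, h51, h10]; ring
  rw [hnf]
  ext n
  rcases n with _ | n
  · simp only [map_add, map_sub, coeff_C_mul, coeff_X_pow_mul', coeff_DD, β, coeff_mk, map_zero]
    norm_num [bb]
  · simp only [map_add, map_sub, coeff_C_mul, coeff_X_pow_mul', coeff_DD, β, coeff_mk, map_zero]
    rcases n with _ | n
    · norm_num [bb]
    · rcases n with _ | n
      · norm_num [bb]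
      · -- general index n+3
        rw [if_pos (by omega : 3 ≤ n+3), if_pos (by omega : 2 ≤ n+3),
          if_pos (by omega : 1 ≤ n+3)]
        simp only [show n+1+1+1-3 = n from by omega, show n+1+1+1-2 = n+1 from by omega,
          show n+1+1+1-1 = n+2 from by omega, show n+1+1+1 = n+3 from by omega,
          show n+1+1 = n+2 from by omega,
          show n+2+1 = n+3 from by omega, show n+3+1 = n+4 from by omega,
          show n+2+2 = n+4 from by omega, show n+1+2 = n+3 from by omega]
        rw [if_pos (by omega : 2 ≤ n+3), if_pos (by omega : 1 ≤ n+3)]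
        simp only [bb]
        have h1 : ((n:ℚ)+2)^2 ≠ 0 := by positivity
        have h2 : ((n:ℚ)+1+2)^2 ≠ 0 := by positivity
        have h3 : ((n:ℚ)+2+2)^2 ≠ 0 := by positivity
        push_cast
        field_simp
        ring

private lemma hE4 :
    (X^4 - 34*X^3 + X^2) * DD (DD (DD (β^2))) * 4 + (6*X^3 - 153*X^2 + 3*X) * DD (DD (β^2)) * 4
      + (7*X^2 - 112*X + 1) * DD (β^2) * 4 + (X - 5) * (β^2) * 4 = 0 := by
  have hC : (4:ℚ⟦X⟧) * C (1/4:ℚ) = 1 := by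
    rw [← map_ofNat (C (R := ℚ)) 4, ← map_mul]; norm_num
  have h4 : X * (X ^ 2 - 34 * X + 1) * DD (DD β) * 4 + (2 * X ^ 2 - 51 * X + 1) * DD β * 4
      + (X - 10) * β = 0 := by linear_combination (4:ℚ⟦X⟧) * hL2 - ((X-10)*β)*hC
  have h4' : d⁄dX ℚ (X * (X ^ 2 - 34 * X + 1) * DD (DD β) * 4 + (2 * X ^ 2 - 51 * X + 1) * DD β * 4
      + (X - 10) * β) = 0 := by rw [h4]; exact map_zero _
  have key : (X^4 - 34*X^3 + X^2) * DD (DD (DD (β^2))) * 4 + (6*X^3 - 153*X^2 + 3*X) * DD (DD (β^2)) * 4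
      + (7*X^2 - 112*X + 1) * DD (β^2) * 4 + (X - 5) * (β^2) * 4
      = 2*X*β*(d⁄dX ℚ (X * (X ^ 2 - 34 * X + 1) * DD (DD β) * 4 + (2 * X ^ 2 - 51 * X + 1) * DD β * 4
          + (X - 10) * β))
        + (2*β + 6*X*(DD β)) * (X * (X ^ 2 - 34 * X + 1) * DD (DD β) * 4 + (2 * X ^ 2 - 51 * X + 1) * DD β * 4
          + (X - 10) * β) := by
    have dmul : ∀ f g : ℚ⟦X⟧, d⁄dX ℚ (f * g) = f * d⁄dX ℚ g + g * d⁄dX ℚ f := fun f g => by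
      rw [Derivation.leibniz]; simp [smul_eq_mul]
    have e1 : d⁄dX ℚ (1:ℚ⟦X⟧) = 0 := Derivation.map_one_eq_zero _
    have e2 : d⁄dX ℚ (2:ℚ⟦X⟧) = 0 := by rw [← map_ofNat (C (R := ℚ)) 2]; exact derivative_C
    have e4 : d⁄dX ℚ (4:ℚ⟦X⟧) = 0 := by rw [← map_ofNat (C (R := ℚ)) 4]; exact derivative_C
    have e10 : d⁄dX ℚ (10:ℚ⟦X⟧) = 0 := by rw [← map_ofNat (C (R := ℚ)) 10]; exact derivative_C
    have e34 : d⁄dX ℚ (34:ℚ⟦X⟧) = 0 := by rw [← map_ofNat (C (R := ℚ)) 34]; exact derivative_C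
    have e51 : d⁄dX ℚ (51:ℚ⟦X⟧) = 0 := by rw [← map_ofNat (C (R := ℚ)) 51]; exact derivative_C
    have hb2 : d⁄dX ℚ (β^2) = 2*β*(d⁄dX ℚ β) := by rw [sq, dmul]; ring
    have hX2 : d⁄dX ℚ ((X:ℚ⟦X⟧)^2) = 2*X := by rw [sq, dmul, derivative_X]; ring
    have hX3 : d⁄dX ℚ ((X:ℚ⟦X⟧)^3) = 3*X^2 := by
      rw [show (X:ℚ⟦X⟧)^3 = X^2*X from by ring, dmul, derivative_X, hX2]; ring
    have hX4 : d⁄dX ℚ ((X:ℚ⟦X⟧)^4) = 4*X^3 := by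
      rw [show (X:ℚ⟦X⟧)^4 = X^3*X from by ring, dmul, derivative_X, hX3]; ring
    simp only [DD_eq, hb2, map_add, map_sub, dmul, derivative_X, hX2, hX3, hX4,
      e1, e2, e4, e10, e34, e51, mul_one, mul_zero, one_mul, zero_mul, zero_add, add_zero]
    ring
  rw [key, h4', h4]
  ring

private lemma hT : X^4 * DD (DD (DD (β^2))) - C (34:ℚ) * (X^3 * DD (DD (DD (β^2))))
    + X^2 * DD (DD (DD (β^2)))
    + C (6:ℚ) * (X^3 * DD (DD (β^2))) - C (153:ℚ) * (X^2 * DD (DD (β^2))) + C (3:ℚ) * (X^1 * DD (DD (β^2)))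
    + C (7:ℚ) * (X^2 * DD (β^2)) - C (112:ℚ) * (X^1 * DD (β^2)) + DD (β^2)
    + X^1 * (β^2) - C (5:ℚ) * (β^2) = 0 := by
  have h4 : (C (4:ℚ)) * (X^4 * DD (DD (DD (β^2))) - C (34:ℚ) * (X^3 * DD (DD (DD (β^2))))
      + X^2 * DD (DD (DD (β^2)))
      + C (6:ℚ) * (X^3 * DD (DD (β^2))) - C (153:ℚ) * (X^2 * DD (DD (β^2))) + C (3:ℚ) * (X^1 * DD (DD (β^2)))
      + C (7:ℚ) * (X^2 * DD (β^2)) - C (112:ℚ) * (X^1 * DD (β^2)) + DD (β^2)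
      + X^1 * (β^2) - C (5:ℚ) * (β^2)) = 0 := by
    rw [← hE4]
    have h34 : (34:ℚ⟦X⟧) = C (34:ℚ) := (map_ofNat (C (R := ℚ)) 34).symm
    have h6 : (6:ℚ⟦X⟧) = C (6:ℚ) := (map_ofNat (C (R := ℚ)) 6).symm
    have h153 : (153:ℚ⟦X⟧) = C (153:ℚ) := (map_ofNat (C (R := ℚ)) 153).symm
    have h3 : (3:ℚ⟦X⟧) = C (3:ℚ) := (map_ofNat (C (R := ℚ)) 3).symm
    have h7 : (7:ℚ⟦X⟧) = C (7:ℚ) := (map_ofNat (C (R := ℚ)) 7).symm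
    have h112 : (112:ℚ⟦X⟧) = C (112:ℚ) := (map_ofNat (C (R := ℚ)) 112).symm
    have h5 : (5:ℚ⟦X⟧) = C (5:ℚ) := (map_ofNat (C (R := ℚ)) 5).symm
    have h4' : (4:ℚ⟦X⟧) = C (4:ℚ) := (map_ofNat (C (R := ℚ)) 4).symm
    rw [h34, h6, h153, h3, h7, h112, h5, h4']; ring
  rcases mul_eq_zero.mp h4 with h | h
  · exfalso
    have h0 : (4:ℚ) = 0 := by simpa using congrArg (constantCoeff) h
    norm_num at h0
  · exact h

private lemma crec (n : ℕ) :
    ((n:ℚ)+2)^3 * coeff (n+2) (β^2)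
      = (34*((n:ℚ)+1)^3+51*((n:ℚ)+1)^2+27*((n:ℚ)+1)+5) * coeff (n+1) (β^2)
        - ((n:ℚ)+1)^3 * coeff n (β^2) := by
  have h := congrArg (coeff (n+1)) hT
  simp only [map_add, map_sub, coeff_C_mul, coeff_X_pow_mul', coeff_DD, map_zero] at h
  rcases n with _ | n
  · norm_num at h
    simp only [coeff_zero_eq_constantCoeff, map_pow]
    linear_combination h
  · rcases n with _ | n
    · norm_num at h; linear_combination h
    · rcases n with _ | n
      · norm_num at h; linear_combination h
      · rw [if_pos (by omega : 4 ≤ n+3+1), if_pos (by omega : 3 ≤ n+3+1),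
          if_pos (by omega : 2 ≤ n+3+1), if_pos (by omega : 1 ≤ n+3+1)] at h
        simp only [show n+3+1-4 = n from by omega, show n+3+1-3 = n+1 from by omega,
          show n+3+1-2 = n+2 from by omega, show n+3+1-1 = n+3 from by omega,
          show n+3+1 = n+4 from by omega, show n+1+1 = n+2 from by omega,
          show n+2+1 = n+3 from by omega, show n+3+1 = n+4 from by omega,
          show n+4+1 = n+5 from by omega] at h
        push_cast at h ⊢
        linear_combination h

private lemma sq_coeff : ∀ n, coeff n (β^2) = ap n := by
  intro n
  induction n using Nat.strong_induction_on with
  | _ n ih =>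
    match n with
    | 0 =>
      rw [sq]
      rw [show (coeff 0) (β*β) = coeff 0 β * coeff 0 β from by
        simp [coeff_zero_eq_constantCoeff]]
      norm_num [β, bb, ap, FF, coeff_mk]
    | 1 =>
      rw [sq, coeff_mul, Finset.Nat.sum_antidiagonal_eq_sum_range_succ_mk]
      norm_num [β, bb, ap, FF, coeff_mk, Finset.sum_range_succ, Nat.choose]
    | (m+2) =>
      have h1 := crec m
      have h2 := arec m
      have e1 : coeff (m+1) (β^2) = ap (m+1) := ih _ (by omega)
      have e0 : coeff m (β^2) = ap m := ih _ (by omega)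
      have key : ((m:ℚ)+2)^3 * coeff (m+2) (β^2) = ((m:ℚ)+2)^3 * ap (m+2) := by
        rw [h1, h2, e1, e0]
      exact mul_left_cancel₀ (by positivity) key

/-- There is a formal power series `β ∈ ℚ[[X]]` with `β(0) = 1`, `β'(0) = 5/2`,
solving Dwork's second-order equation, whose square is the generating series of the Apéry
numbers. -/
theorem exists_sqrt_apery_series :
    let a : ℕ → ℚ := fun n =>
      ∑ k ∈ Finset.range (n + 1), (n.choose k : ℚ) ^ 2 * ((n + k).choose n : ℚ) ^ 2
    let A : PowerSeries ℚ := PowerSeries.mk a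
    let D : PowerSeries ℚ → PowerSeries ℚ := PowerSeries.derivativeFun
    ∃ β : PowerSeries ℚ,
      PowerSeries.coeff 0 β = 1 ∧ PowerSeries.coeff 1 β = 5 / 2 ∧
      X * (X ^ 2 - 34 * X + 1) * D (D β) + (2 * X ^ 2 - 51 * X + 1) * D β
          + PowerSeries.C (1 / 4 : ℚ) * (X - 10) * β = 0 ∧
      β ^ 2 = A := by
  intro a A D
  refine ⟨β, ?_, ?_, ?_, ?_⟩
  · simp [β, coeff_mk, bb]
  · simp [β, coeff_mk]; norm_num [bb]
  · exact hL2
  · ext n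
    rw [sq_coeff n]
    show ap n = coeff n (PowerSeries.mk a)
    rw [coeff_mk]
    show _ = ∑ k ∈ Finset.range (n + 1), (n.choose k : ℚ) ^ 2 * ((n + k).choose n : ℚ) ^ 2
    unfold ap FF
    refine Finset.sum_congr rfl fun k _ => ?_
    rw [Nat.choose_symm_add]
end

section
/- Let U ⊆ ℝ be an open set and let y₁, y₂ : ℝ → ℝ be functions that are twice differentiable on U and satisfy, for all x ∈ U, x(x² − 34x + 1)y_i''(x) + (2x² − 51x + 1)y_i'(x) + (1/4)(x − 10)y_i(x) = 0 (i = 1, 2). Then the product z := y₁·y₂ is three times differentiable on U and satisfies, for all x ∈ U, x²(1 − 34x + x²)z'''(x) + x(3 − 153x + 6x²)z''(x) + (1 − 112x + 7x²)z'(x) + (x − 5)z(x) = 0. (In other words, the third-order Apéry differential equation is the symmetric square of this second-order equation.) -/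
open Filter Set Topology

lemma barrier_upper {φ κ ρ : ℝ → ℝ} {s b ε : ℝ} (hε : 0 < ε)
    (hd : ∀ x ∈ Icc s b, DifferentiableAt ℝ φ x)
    (hder : ∀ x ∈ Ioo s b, deriv φ x = -κ x * φ x + ρ x)
    (hφ0 : φ s = 0)
    (hκ : ∀ x ∈ Ioo s b, 0 ≤ κ x)
    (hρ : ∀ x ∈ Ioo s b, |ρ x| ≤ ε * (x - s)) :
    ∀ x ∈ Icc s b, φ x ≤ ε * (x - s) ^ 2 := by
  intro x hx
  have key : ∀ σ > (0:ℝ), φ x ≤ ε * (x - s) ^ 2 + σ := by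
    intro σ hσ
    have hcont : ContinuousOn φ (Icc s b) := fun t ht =>
      (hd t ht).continuousAt.continuousWithinAt
    have hasd : ∀ t ∈ Ico s b, HasDerivWithinAt φ (deriv φ t) (Ici t) t := fun t ht =>
      ((hd t ⟨ht.1, le_of_lt ht.2⟩).hasDerivAt).hasDerivWithinAt
    have hB : ∀ t, HasDerivAt (fun u => ε * (u - s) ^ 2 + σ) (ε * (2 * (t - s))) t := by
      intro t
      have h1 : HasDerivAt (fun u : ℝ => (u - s)) 1 t := (hasDerivAt_id t).sub_const s
      have h2 := h1.pow 2
      have h3 := (h2.const_mul ε).add_const σ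
      refine h3.congr_deriv ?_
      ring
    have ha : φ s ≤ ε * (s - s) ^ 2 + σ := by
      rw [hφ0]; nlinarith
    have bound : ∀ t ∈ Ico s b, φ t = ε * (t - s) ^ 2 + σ →
        deriv φ t < ε * (2 * (t - s)) := by
      intro t ht heqt
      rcases eq_or_lt_of_le ht.1 with h | h
      · exfalso
        rw [← h] at heqt
        rw [hφ0] at heqt
        nlinarith
      · have htIoo : t ∈ Ioo s b := ⟨h, ht.2⟩
        rw [hder t htIoo]
        have hφt : 0 < φ t := by rw [heqt]; nlinarith
        have h1 : -κ t * φ t ≤ 0 := by nlinarith [hκ t htIoo]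
        have h2 : ρ t ≤ ε * (t - s) := (abs_le.mp (hρ t htIoo)).2
        nlinarith
    exact image_le_of_deriv_right_lt_deriv_boundary hcont hasd ha hB bound hx
  have := le_of_forall_pos_le_add key
  linarith

lemma barrier_abs {φ κ ρ : ℝ → ℝ} {s b ε : ℝ} (hε : 0 < ε)
    (hd : ∀ x ∈ Icc s b, DifferentiableAt ℝ φ x)
    (hder : ∀ x ∈ Ioo s b, deriv φ x = -κ x * φ x + ρ x)
    (hφ0 : φ s = 0)
    (hκ : ∀ x ∈ Ioo s b, 0 ≤ κ x)
    (hρ : ∀ x ∈ Ioo s b, |ρ x| ≤ ε * (x - s)) :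
    ∀ x ∈ Icc s b, |φ x| ≤ ε * (x - s) ^ 2 := by
  intro x hx
  have hup := barrier_upper hε hd hder hφ0 hκ hρ x hx
  have hd' : ∀ t ∈ Icc s b, DifferentiableAt ℝ (fun u => -φ u) t := fun t ht => (hd t ht).neg
  have hder' : ∀ t ∈ Ioo s b, deriv (fun u => -φ u) t = -κ t * (-φ t) + (-ρ t) := by
    intro t ht
    rw [deriv.fun_neg, hder t ht]
    ring
  have hρ' : ∀ t ∈ Ioo s b, |(-ρ t)| ≤ ε * (t - s) := by
    intro t ht; rw [abs_neg]; exact hρ t ht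
  have hlow := barrier_upper hε hd' hder' (by simp [hφ0]) hκ hρ' x hx
  rw [abs_le]
  constructor
  · simpa using neg_le_of_neg_le (by linarith [hlow] : -φ x ≤ ε * (x - s) ^ 2)
  · exact hup

lemma abs_le_of_barrier {φ κ : ℝ → ℝ} {s δ ε : ℝ} (hδ : 0 < δ) (hε : 0 < ε)
    (hd : ∀ x, |x - s| ≤ δ → DifferentiableAt ℝ φ x)
    (hφ0 : φ s = 0)
    (hκ : ∀ x, 0 < |x - s| → |x - s| ≤ δ → 0 < κ x * (x - s))
    (hρ : ∀ x, 0 < |x - s| → |x - s| ≤ δ → |deriv φ x + κ x * φ x| ≤ ε * |x - s|) :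
    ∀ x, |x - s| ≤ δ → |φ x| ≤ ε * (x - s) ^ 2 := by
  have habs : ∀ t : ℝ, t ∈ Ioo s (s + δ) → 0 < |t - s| ∧ |t - s| ≤ δ ∧ 0 < t - s := by
    intro t ht
    have h0 : 0 < t - s := by linarith [ht.1]
    refine ⟨abs_pos.mpr (sub_ne_zero.mpr (ne_of_gt (show t > s by linarith))), ?_, h0⟩
    rw [abs_le]; constructor <;> [linarith; linarith [ht.2]]
  -- right side
  have hright : ∀ x ∈ Icc s (s + δ), |φ x| ≤ ε * (x - s) ^ 2 := by
    apply barrier_abs (κ := κ) (ρ := fun x => deriv φ x + κ x * φ x) hε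
    · intro t ht
      apply hd
      rw [abs_le]; constructor <;> [linarith [ht.1]; linarith [ht.2]]
    · intro t _; ring
    · exact hφ0
    · intro t ht
      obtain ⟨h1, h2, h3⟩ := habs t ht
      have hpos := hκ t h1 h2
      rcases mul_pos_iff.mp hpos with ⟨h, _⟩ | ⟨_, h⟩
      · exact le_of_lt h
      · linarith
    · intro t ht
      obtain ⟨h1, h2, h3⟩ := habs t ht
      have := hρ t h1 h2
      rwa [abs_of_pos h3] at this
  -- left side via reflection
  have hderψ : ∀ t : ℝ, |t - s| ≤ δ → deriv (fun u => φ (2 * s - u)) t = -(deriv φ (2 * s - t)) := by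
    intro t ht
    have hdx : |(2 * s - t) - s| ≤ δ := by
      rw [show (2 * s - t) - s = -(t - s) by ring, abs_neg]; exact ht
    have hinner : HasDerivAt (fun u : ℝ => 2 * s - u) (-1) t := (hasDerivAt_id t).const_sub (2 * s)
    have houter := (hd _ hdx).hasDerivAt
    have hcomp : HasDerivAt (fun u => φ (2 * s - u)) (deriv φ (2 * s - t) * -1) t :=
      houter.comp t hinner
    rw [hcomp.deriv]
    ring
  have hleft : ∀ t ∈ Icc s (s + δ), |φ (2 * s - t)| ≤ ε * (t - s) ^ 2 := by
    apply barrier_abs (κ := fun t => -κ (2 * s - t))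
      (ρ := fun t => -(deriv φ (2 * s - t) + κ (2 * s - t) * φ (2 * s - t))) hε
    · intro t ht
      have hdx : |(2 * s - t) - s| ≤ δ := by
        rw [abs_le] at *; constructor <;> [linarith [ht.2]; linarith [ht.1]]
      have hinner : DifferentiableAt ℝ (fun u : ℝ => 2 * s - u) t :=
        ((differentiable_const (2*s)).sub differentiable_id).differentiableAt
      exact (hd _ hdx).comp t hinner
    · intro t ht
      obtain ⟨h1, h2, h3⟩ := habs t ht
      have hdx : |t - s| ≤ δ := h2
      rw [hderψ t hdx]
      ring
    · show φ (2 * s - s) = 0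
      rw [show 2 * s - s = s by ring]; exact hφ0
    · intro t ht
      obtain ⟨h1, h2, h3⟩ := habs t ht
      have h1' : 0 < |(2 * s - t) - s| := by
        rw [show (2 * s - t) - s = -(t - s) by ring, abs_neg]; exact h1
      have h2' : |(2 * s - t) - s| ≤ δ := by
        rw [show (2 * s - t) - s = -(t - s) by ring, abs_neg]; exact h2
      have hpos := hκ _ h1' h2'
      have hneg : (2 * s - t) - s < 0 := by linarith
      rcases mul_pos_iff.mp hpos with ⟨_, h⟩ | ⟨h, _⟩
      · linarith
      · linarith
    · intro t ht
      obtain ⟨h1, h2, h3⟩ := habs t ht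
      have h1' : 0 < |(2 * s - t) - s| := by
        rw [show (2 * s - t) - s = -(t - s) by ring, abs_neg]; exact h1
      have h2' : |(2 * s - t) - s| ≤ δ := by
        rw [show (2 * s - t) - s = -(t - s) by ring, abs_neg]; exact h2
      have := hρ _ h1' h2'
      rw [abs_neg]
      have heq : |(2 * s - t) - s| = t - s := by
        rw [show (2 * s - t) - s = -(t - s) by ring, abs_neg, abs_of_pos h3]
      rw [heq] at this
      exact this
  intro x hx
  rcases le_total s x with h | h
  · apply hright
    rw [abs_le] at hx
    exact ⟨h, by linarith [hx.2]⟩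
  · have := hleft (2 * s - x) ⟨by linarith, by rw [abs_le] at hx; linarith [hx.1]⟩
    rw [show 2 * s - (2 * s - x) = x by ring] at this
    calc |φ x| ≤ ε * ((2 * s - x) - s) ^ 2 := this
      _ = ε * (x - s) ^ 2 := by ring

lemma tendsto_div_sq {φ κ : ℝ → ℝ} {s : ℝ}
    (hd : ∀ᶠ x in 𝓝 s, DifferentiableAt ℝ φ x)
    (hφ0 : φ s = 0)
    (hκ : ∀ᶠ x in 𝓝[≠] s, 0 < κ x * (x - s))
    (hρ : Tendsto (fun x => (deriv φ x + κ x * φ x) / (x - s)) (𝓝[≠] s) (𝓝 0)) :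
    Tendsto (fun x => φ x / (x - s) ^ 2) (𝓝[≠] s) (𝓝 0) := by
  rw [Metric.tendsto_nhdsWithin_nhds]
  intro ε hε
  have hε2 : 0 < ε / 2 := by linarith
  rw [Metric.tendsto_nhdsWithin_nhds] at hρ
  obtain ⟨δ₁, hδ₁, h₁⟩ := hρ (ε / 2) hε2
  obtain ⟨δ₂, hδ₂, h₂⟩ := Metric.eventually_nhds_iff.mp hd
  have hκ' := eventually_nhdsWithin_iff.mp hκ
  obtain ⟨δ₃, hδ₃, h₃⟩ := Metric.eventually_nhds_iff.mp hκ'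
  set δ : ℝ := min δ₁ (min δ₂ δ₃) / 2 with hδdef
  have hδ : 0 < δ := by positivity
  have hbar := abs_le_of_barrier (φ := φ) (κ := κ) (s := s) hδ hε2 ?hd' hφ0 ?hκ' ?hρ'
  case hd' =>
    intro x hx
    apply h₂
    rw [Real.dist_eq]
    have : δ < min δ₂ δ₃ := by
      have h5 : δ ≤ min δ₁ (min δ₂ δ₃) / 2 := le_of_eq hδdef
      have := min_le_right δ₁ (min δ₂ δ₃)
      nlinarith [lt_min hδ₂ hδ₃]
    calc |x - s| ≤ δ := hx
      _ < min δ₂ δ₃ := this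
      _ ≤ δ₂ := min_le_left _ _
  case hκ' =>
    intro x h1 h2
    have hxs : x ≠ s := by rw [abs_pos, sub_ne_zero] at h1; exact h1
    refine h₃ (show dist x s < δ₃ from ?_) hxs
    rw [Real.dist_eq]
    calc |x - s| ≤ δ := h2
      _ < δ₃ := by
        have := min_le_right δ₂ δ₃
        have := min_le_right δ₁ (min δ₂ δ₃)
        nlinarith
  case hρ' =>
    intro x h1 h2
    have hxs : x ≠ s := by rw [abs_pos, sub_ne_zero] at h1; exact h1
    have hdist : dist x s < δ₁ := by
      rw [Real.dist_eq]
      calc |x - s| ≤ δ := h2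
        _ < δ₁ := by
          have := min_le_left δ₁ (min δ₂ δ₃)
          nlinarith
    have := h₁ hxs hdist
    rw [Real.dist_eq, sub_zero, abs_div] at this
    have habs : 0 < |x - s| := h1
    calc |deriv φ x + κ x * φ x| = |deriv φ x + κ x * φ x| / |x - s| * |x - s| := by
          field_simp
      _ ≤ ε / 2 * |x - s| := by
          apply mul_le_mul_of_nonneg_right (le_of_lt this) (abs_nonneg _)
  refine ⟨δ, hδ, ?_⟩
  intro x hxne hxd
  rw [Real.dist_eq] at hxd
  have hb := hbar x (le_of_lt hxd)
  have hxs : x ≠ s := hxne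
  have habs : 0 < |x - s| := abs_pos.mpr (sub_ne_zero.mpr hxs)
  rw [Real.dist_eq, sub_zero, abs_div, abs_pow, sq_abs]
  have hne0 : x - s ≠ 0 := sub_ne_zero.mpr hxs
  have hsq : 0 < (x - s) ^ 2 := by positivity
  rw [div_lt_iff₀ hsq]
  calc |φ x| ≤ ε / 2 * (x - s) ^ 2 := hb
    _ < ε * (x - s) ^ 2 := by nlinarith

lemma deriv_eq_of_tendsto {f : ℝ → ℝ} {s M : ℝ}
    (hd : ∀ᶠ x in 𝓝 s, DifferentiableAt ℝ f x)
    (h : Tendsto (deriv f) (𝓝[≠] s) (𝓝 M)) : deriv f s = M := by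
  have hs : DifferentiableAt ℝ f s := hd.self_of_nhds
  have h1 : Tendsto (slope f s) (𝓝[≠] s) (𝓝 (deriv f s)) :=
    hasDerivAt_iff_tendsto_slope.mp hs.hasDerivAt
  suffices h2 : Tendsto (slope f s) (𝓝[≠] s) (𝓝 M) from tendsto_nhds_unique h1 h2
  rw [Metric.tendsto_nhdsWithin_nhds] at h ⊢
  intro ε hε
  obtain ⟨δ₁, hδ₁, hball⟩ := Metric.eventually_nhds_iff.mp hd
  obtain ⟨δ₂, hδ₂, hder⟩ := h ε hε
  refine ⟨min δ₁ δ₂, lt_min hδ₁ hδ₂, ?_⟩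
  intro x hxne hxd
  have hxs : x ≠ s := hxne
  rw [Real.dist_eq] at hxd
  have hd₁ : |x - s| < δ₁ := lt_of_lt_of_le hxd (min_le_left _ _)
  have hd₂ : |x - s| < δ₂ := lt_of_lt_of_le hxd (min_le_right _ _)
  rcases lt_or_gt_of_ne hxs with hlt | hgt
  · -- x < s
    have hcont : ContinuousOn f (Icc x s) := by
      intro t ht
      have : |t - s| < δ₁ := by
        rw [abs_sub_lt_iff] at hd₁ ⊢
        constructor <;> [linarith [ht.1, ht.2, hd₁.1]; linarith [ht.1, ht.2, hd₁.2]]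
      exact ((hball (by rwa [Real.dist_eq])).continuousAt).continuousWithinAt
    have hdiff : ∀ t ∈ Ioo x s, HasDerivAt f (deriv f t) t := by
      intro t ht
      have : |t - s| < δ₁ := by
        rw [abs_sub_lt_iff] at hd₁ ⊢
        constructor <;> [linarith [ht.1, ht.2, hd₁.1]; linarith [ht.1, ht.2, hd₁.2]]
      exact (hball (by rwa [Real.dist_eq])).hasDerivAt
    obtain ⟨c, hc, hceq⟩ := exists_hasDerivAt_eq_slope f (deriv f) hlt hcont hdiff
    have hcdist : dist c s < δ₂ := by
      rw [Real.dist_eq]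
      rw [abs_sub_lt_iff] at hd₂ ⊢
      constructor <;> [linarith [hc.1, hc.2, hd₂.1]; linarith [hc.1, hc.2, hd₂.2]]
    have hcne : c ≠ s := ne_of_lt hc.2
    have := hder hcne hcdist
    have hslope : slope f s x = deriv f c := by
      rw [slope_def_field, hceq]
      rw [div_eq_div_iff (by linarith : x - s ≠ 0) (by linarith : s - x ≠ 0)]
      ring
    rwa [hslope]
  · -- s < x
    have hcont : ContinuousOn f (Icc s x) := by
      intro t ht
      have : |t - s| < δ₁ := by
        rw [abs_sub_lt_iff] at hd₁ ⊢
        constructor <;> [linarith [ht.1, ht.2, hd₁.1]; linarith [ht.1, ht.2, hd₁.2]]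
      exact ((hball (by rwa [Real.dist_eq])).continuousAt).continuousWithinAt
    have hdiff : ∀ t ∈ Ioo s x, HasDerivAt f (deriv f t) t := by
      intro t ht
      have : |t - s| < δ₁ := by
        rw [abs_sub_lt_iff] at hd₁ ⊢
        constructor <;> [linarith [ht.1, ht.2, hd₁.1]; linarith [ht.1, ht.2, hd₁.2]]
      exact (hball (by rwa [Real.dist_eq])).hasDerivAt
    obtain ⟨c, hc, hceq⟩ := exists_hasDerivAt_eq_slope f (deriv f) hgt hcont hdiff
    have hcdist : dist c s < δ₂ := by
      rw [Real.dist_eq]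
      rw [abs_sub_lt_iff] at hd₂ ⊢
      constructor <;> [linarith [hc.1, hc.2, hd₂.1]; linarith [hc.1, hc.2, hd₂.2]]
    have hcne : c ≠ s := ne_of_gt hc.1
    have := hder hcne hcdist
    have hslope : slope f s x = deriv f c := by
      rw [slope_def_field, hceq]
    rwa [hslope]

lemma hasDerivAt_P (t : ℝ) :
    HasDerivAt (fun u : ℝ => u * (u ^ 2 - 34 * u + 1)) (3 * t ^ 2 - 68 * t + 1) t := by
  have h1 : HasDerivAt (fun u : ℝ => u ^ 2 - 34 * u + 1) (2 * t - 34) t := by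
    have ha := hasDerivAt_pow 2 t
    have hb := (hasDerivAt_id t).const_mul (34 : ℝ)
    have := (ha.sub hb).add_const 1
    refine this.congr_deriv ?_
    push_cast
    ring
  have := (hasDerivAt_id t).mul h1
  refine this.congr_deriv ?_
  simp only [id_eq]
  ring

lemma hasDerivAt_Q (t : ℝ) :
    HasDerivAt (fun u : ℝ => 2 * u ^ 2 - 51 * u + 1) (4 * t - 51) t := by
  have ha := (hasDerivAt_pow 2 t).const_mul (2 : ℝ)
  have hb := (hasDerivAt_id t).const_mul (51 : ℝ)
  have := (ha.sub hb).add_const 1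
  refine this.congr_deriv ?_
  push_cast
  ring

lemma hasDerivAt_R (t : ℝ) :
    HasDerivAt (fun u : ℝ => (1 / 4) * (u - 10)) (1 / 4) t := by
  have := ((hasDerivAt_id t).sub_const 10).const_mul (1 / 4 : ℝ)
  refine this.congr_deriv ?_
  ring

lemma tendsto_self_div {f : ℝ → ℝ} {s : ℝ} (hf : DifferentiableAt ℝ f s) (h0 : f s = 0) :
    Filter.Tendsto (fun t => f t / (t - s)) (𝓝[≠] s) (𝓝 (deriv f s)) := by
  have h := hasDerivAt_iff_tendsto_slope.mp hf.hasDerivAt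
  have heq : slope f s = fun t => f t / (t - s) := by
    funext t; rw [slope_def_field, h0, sub_zero]
  rwa [heq] at h

lemma key_diff (U : Set ℝ) (hU : IsOpen U) (y : ℝ → ℝ)
    (hy : ∀ x ∈ U, DifferentiableAt ℝ y x ∧ DifferentiableAt ℝ (deriv y) x)
    (heq : ∀ x ∈ U, x * (x ^ 2 - 34 * x + 1) * deriv (deriv y) x
      + (2 * x ^ 2 - 51 * x + 1) * deriv y x + (1 / 4) * (x - 10) * y x = 0) :
    ∀ x ∈ U, DifferentiableAt ℝ (deriv (deriv y)) x := by
  set P : ℝ → ℝ := fun t => t * (t ^ 2 - 34 * t + 1) with hPdef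
  set g : ℝ → ℝ := fun t =>
    (2 * t ^ 2 - 51 * t + 1) * deriv y t + (1 / 4) * (t - 10) * y t with hgdef
  have hgdiff : ∀ t ∈ U, DifferentiableAt ℝ g t := by
    intro t ht
    exact ((hasDerivAt_Q t).differentiableAt.mul (hy t ht).2).add
      ((hasDerivAt_R t).differentiableAt.mul (hy t ht).1)
  have hgderiv : ∀ t ∈ U, deriv g t =
      (4 * t - 51) * deriv y t + (2 * t ^ 2 - 51 * t + 1) * deriv (deriv y) t
        + (1 / 4) * y t + (1 / 4) * (t - 10) * deriv y t := by
    intro t ht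
    have h1 := (hasDerivAt_Q t).mul (hy t ht).2.hasDerivAt
    have h2 := (hasDerivAt_R t).mul (hy t ht).1.hasDerivAt
    have := (h1.add h2).deriv
    rw [show deriv g t = _ from this]
    ring
  have hPy : ∀ t ∈ U, P t * deriv (deriv y) t = -g t := by
    intro t ht
    have := heq t ht
    simp only [hPdef, hgdef]
    linarith
  intro x₀ hx₀
  have hU' : ∀ᶠ t in 𝓝 x₀, t ∈ U := hU.eventually_mem hx₀
  have hUne : ∀ᶠ t in 𝓝[≠] x₀, t ∈ U := hU'.filter_mono nhdsWithin_le_nhds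
  by_cases hP0 : P x₀ = 0
  swap
  · -- regular point
    have hPne : ∀ᶠ t in 𝓝 x₀, P t ≠ 0 :=
      ((hasDerivAt_P x₀).differentiableAt.continuousAt).eventually_ne hP0
    have hev : deriv (deriv y) =ᶠ[𝓝 x₀] fun t => -g t / P t := by
      filter_upwards [hU', hPne] with t htU htP
      rw [eq_div_iff htP]
      linear_combination hPy t htU
    have hdq : DifferentiableAt ℝ (fun t => -g t / P t) x₀ :=
      ((hgdiff x₀ hx₀).neg).div (hasDerivAt_P x₀).differentiableAt hP0
    exact hdq.congr_of_eventuallyEq hev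
  · -- singular point
    set π : ℝ := 3 * x₀ ^ 2 - 68 * x₀ + 1 with hπdef
    have hπQ : 0 < (2 * x₀ ^ 2 - 51 * x₀ + 1) * π := by
      rcases mul_eq_zero.mp hP0 with h | h
      · rw [hπdef, h]; norm_num
      · have h17 : 17 * x₀ - 1 ≠ 0 := by
          intro hc
          have hx : x₀ = 1 / 17 := by linarith
          rw [hx] at h; norm_num at h
        have e1 : 2 * x₀ ^ 2 - 51 * x₀ + 1 = 17 * x₀ - 1 := by linear_combination 2 * h
        have e2 : π = 2 * (17 * x₀ - 1) := by rw [hπdef]; linear_combination 3 * h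
        rw [e1, e2]
        calc (0:ℝ) < 2 * (17 * x₀ - 1) ^ 2 := by positivity
          _ = (17 * x₀ - 1) * (2 * (17 * x₀ - 1)) := by ring
    have hπ : π ≠ 0 := by
      intro hc; rw [hc, mul_zero] at hπQ; exact lt_irrefl 0 hπQ
    have hPd : HasDerivAt P π x₀ := hasDerivAt_P x₀
    have hslopeP : Tendsto (fun t => P t / (t - x₀)) (𝓝[≠] x₀) (𝓝 π) := by
      have := tendsto_self_div hPd.differentiableAt hP0
      rwa [hPd.deriv] at this
    have hPne : ∀ᶠ t in 𝓝[≠] x₀, P t ≠ 0 := by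
      filter_upwards [hslopeP.eventually_ne hπ] with t h1
      intro hc
      rw [hc, zero_div] at h1
      exact h1 rfl
    have hinv : Tendsto (fun t => (t - x₀) / P t) (𝓝[≠] x₀) (𝓝 π⁻¹) := by
      have := hslopeP.inv₀ hπ
      have heq : (fun t => (P t / (t - x₀))⁻¹) = fun t => (t - x₀) / P t := by
        funext t; rw [inv_div]
      rwa [heq] at this
    have hyy : ∀ᶠ t in 𝓝[≠] x₀, deriv (deriv y) t = -g t / P t := by
      filter_upwards [hUne, hPne] with t htU htP
      rw [eq_div_iff htP]
      linear_combination hPy t htU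
    have hg0 : g x₀ = 0 := by
      have := hPy x₀ hx₀
      rw [hP0, zero_mul] at this
      linarith
    have hgd0 : DifferentiableAt ℝ g x₀ := hgdiff x₀ hx₀
    set M : ℝ := -(deriv g x₀) * π⁻¹ with hMdef
    have hlim2 : Tendsto (deriv (deriv y)) (𝓝[≠] x₀) (𝓝 M) := by
      have h1 : Tendsto (fun t => -(g t / (t - x₀)) * ((t - x₀) / P t)) (𝓝[≠] x₀)
          (𝓝 (-(deriv g x₀) * π⁻¹)) := ((tendsto_self_div hgd0 hg0).neg).mul hinv
      rw [← hMdef] at h1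
      apply h1.congr'
      filter_upwards [hyy, hPne, self_mem_nhdsWithin] with t ht htP htne
      rw [ht]
      have htx : t - x₀ ≠ 0 := sub_ne_zero.mpr htne
      field_simp
    have hL : deriv (deriv y) x₀ = M :=
      deriv_eq_of_tendsto (hU'.mono fun t ht => (hy t ht).2) hlim2
    -- the auxiliary function h and its properties
    set h : ℝ → ℝ := fun t => g t + M * P t with hhdef
    have hhd : ∀ t ∈ U, DifferentiableAt ℝ h t := fun t ht =>
      (hgdiff t ht).add ((hasDerivAt_P t).differentiableAt.const_mul M)
    have hh0 : h x₀ = 0 := by rw [hhdef]; simp only [hg0, hP0, mul_zero, add_zero]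
    have hhder : ∀ t ∈ U, deriv h t = deriv g t + M * (3 * t ^ 2 - 68 * t + 1) := by
      intro t ht
      exact ((hgdiff t ht).hasDerivAt.add ((hasDerivAt_P t).const_mul M)).deriv
    have hdg0 : deriv g x₀ = -M * π := by rw [hMdef]; field_simp
    have hdh0 : deriv h x₀ = 0 := by
      rw [hhder x₀ hx₀, hdg0, ← hπdef]; ring
    -- the function A
    set A : ℝ → ℝ := fun t => (4 * t - 51) * deriv y t + (1 / 4) * y t
      + (1 / 4) * (t - 10) * deriv y t
      + M * ((2 * t ^ 2 - 51 * t + 1) + (3 * t ^ 2 - 68 * t + 1)) with hAdef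
    have hAdiff : DifferentiableAt ℝ A x₀ := by
      have h1 : DifferentiableAt ℝ (fun t : ℝ => 4 * t - 51) x₀ := by fun_prop
      have h2 : DifferentiableAt ℝ (fun t : ℝ => (1 / 4 : ℝ) * (t - 10)) x₀ := by fun_prop
      have h3 : DifferentiableAt ℝ
          (fun t : ℝ => M * ((2 * t ^ 2 - 51 * t + 1) + (3 * t ^ 2 - 68 * t + 1))) x₀ := by
        fun_prop
      exact (((h1.mul (hy x₀ hx₀).2).add ((differentiableAt_const _).mul (hy x₀ hx₀).1)).add
        (h2.mul (hy x₀ hx₀).2)).add h3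
    have hA0 : A x₀ = 0 := by
      have h1 := hhder x₀ hx₀
      have h2 := hgderiv x₀ hx₀
      rw [hL] at h2
      rw [h2] at h1
      rw [hAdef]
      simp only []
      rw [hdh0] at h1
      linear_combination -h1
    have hAslope : Tendsto (fun t => A t / (t - x₀)) (𝓝[≠] x₀) (𝓝 (deriv A x₀)) :=
      tendsto_self_div hAdiff hA0
    -- constants
    set c : ℝ := (2 * x₀ ^ 2 - 51 * x₀ + 1) * π⁻¹ with hcdef
    have hc : 0 < c := by
      rcases mul_pos_iff.mp hπQ with ⟨ha, hb⟩ | ⟨ha, hb⟩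
      · exact mul_pos ha (inv_pos.mpr hb)
      · rw [hcdef]
        exact mul_pos_of_neg_of_neg ha (inv_lt_zero.mpr hb)
    have h2c : (2 : ℝ) + c ≠ 0 := by positivity
    set m : ℝ := deriv A x₀ / (2 + c) with hmdef
    set φ : ℝ → ℝ := fun t => h t - m * (t - x₀) ^ 2 with hφdef
    set κ : ℝ → ℝ := fun t => (2 * t ^ 2 - 51 * t + 1) / P t with hκdef
    have hquad : ∀ t : ℝ, HasDerivAt (fun u : ℝ => m * (u - x₀) ^ 2) (m * (2 * (t - x₀))) t := by
      intro t
      have h1 : HasDerivAt (fun u : ℝ => (u - x₀)) 1 t := (hasDerivAt_id t).sub_const x₀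
      have h2 := (h1.pow 2).const_mul m
      refine h2.congr_deriv ?_
      ring
    have hφdiff : ∀ t ∈ U, DifferentiableAt ℝ φ t := fun t ht =>
      (hhd t ht).sub (hquad t).differentiableAt
    have hφder : ∀ t ∈ U, deriv φ t = deriv h t - m * (2 * (t - x₀)) := by
      intro t ht
      exact ((hhd t ht).hasDerivAt.sub (hquad t)).deriv
    -- the tendsto of ρ
    have hQten : Tendsto (fun t : ℝ => 2 * t ^ 2 - 51 * t + 1) (𝓝[≠] x₀)
        (𝓝 (2 * x₀ ^ 2 - 51 * x₀ + 1)) := by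
      apply Tendsto.mono_left _ nhdsWithin_le_nhds
      exact (hasDerivAt_Q x₀).differentiableAt.continuousAt.tendsto
    have hκx : Tendsto (fun t => κ t * (t - x₀)) (𝓝[≠] x₀) (𝓝 c) := by
      have h1 := hQten.mul hinv
      rw [← hcdef] at h1
      apply h1.congr'
      filter_upwards [hPne] with t htP
      rw [hκdef]
      field_simp
    have hκsign : ∀ᶠ t in 𝓝[≠] x₀, 0 < κ t * (t - x₀) :=
      hκx.eventually (eventually_gt_nhds hc)
    have hρten : Tendsto (fun t => (deriv φ t + κ t * φ t) / (t - x₀)) (𝓝[≠] x₀) (𝓝 0) := by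
      have hm0 : deriv A x₀ - m * (2 + c) = 0 := by
        rw [hmdef]; field_simp; ring
      have h1 : Tendsto (fun t => A t / (t - x₀) - m * (2 + κ t * (t - x₀))) (𝓝[≠] x₀)
          (𝓝 (deriv A x₀ - m * (2 + c))) :=
        hAslope.sub (tendsto_const_nhds.mul (tendsto_const_nhds.add hκx))
      rw [hm0] at h1
      apply h1.congr'
      filter_upwards [hUne, hPne, self_mem_nhdsWithin] with t htU htP htne
      have htx : t - x₀ ≠ 0 := sub_ne_zero.mpr htne
      have hdd : deriv (deriv y) t = -g t / P t := by
        rw [eq_div_iff htP]; linear_combination hPy t htU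
      have hgform : deriv g t = (4 * t - 51) * deriv y t
          + (2 * t ^ 2 - 51 * t + 1) * (-g t / P t)
          + (1 / 4) * y t + (1 / 4) * (t - 10) * deriv y t := by
        rw [← hdd]; exact hgderiv t htU
      rw [hφder t htU, hhder t htU, hgform, hφdef, hhdef, hκdef, hAdef]
      simp only []
      field_simp
      ring
    -- conclusion of the barrier argument
    have hφ0 : φ x₀ = 0 := by rw [hφdef]; simp [hh0]
    have hφev : ∀ᶠ t in 𝓝 x₀, DifferentiableAt ℝ φ t := hU'.mono fun t ht => hφdiff t ht
    have hφsq := tendsto_div_sq hφev hφ0 hκsign hρten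
    have hhm : Tendsto (fun t => h t / (t - x₀) ^ 2) (𝓝[≠] x₀) (𝓝 m) := by
      have h1 : Tendsto (fun t => φ t / (t - x₀) ^ 2 + m) (𝓝[≠] x₀) (𝓝 (0 + m)) :=
        hφsq.add tendsto_const_nhds
      rw [zero_add] at h1
      apply h1.congr'
      filter_upwards [self_mem_nhdsWithin] with t htne
      have htx : t - x₀ ≠ 0 := sub_ne_zero.mpr htne
      rw [hφdef]
      simp only []
      field_simp
      ring
    -- final slope computation
    have hslope : Tendsto (slope (deriv (deriv y)) x₀) (𝓝[≠] x₀) (𝓝 (-m * π⁻¹)) := by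
      have h1 : Tendsto (fun t => -(h t / (t - x₀) ^ 2) * ((t - x₀) / P t)) (𝓝[≠] x₀)
          (𝓝 (-m * π⁻¹)) := (hhm.neg).mul hinv
      apply h1.congr'
      filter_upwards [hyy, hPne, self_mem_nhdsWithin] with t hdd htP htne
      have htx : t - x₀ ≠ 0 := sub_ne_zero.mpr htne
      rw [slope_def_field, hdd, hL, hhdef]
      simp only []
      field_simp [htx, htP]
      ring
    exact (hasDerivAt_iff_tendsto_slope.mpr hslope).differentiableAt

/-- If `y₁, y₂` are twice differentiable on an open set `U` and both solve
Dwork's second-order equation, then `z = y₁·y₂` is three times differentiable on `U`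
and solves Apéry's third-order equation. -/
theorem apery_symmetric_square (U : Set ℝ) (hU : IsOpen U) (y₁ y₂ : ℝ → ℝ)
    (hy₁ : ∀ x ∈ U, DifferentiableAt ℝ y₁ x ∧ DifferentiableAt ℝ (deriv y₁) x)
    (hy₂ : ∀ x ∈ U, DifferentiableAt ℝ y₂ x ∧ DifferentiableAt ℝ (deriv y₂) x)
    (heq₁ : ∀ x ∈ U,
      x * (x ^ 2 - 34 * x + 1) * deriv (deriv y₁) x + (2 * x ^ 2 - 51 * x + 1) * deriv y₁ x
        + (1 / 4) * (x - 10) * y₁ x = 0)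
    (heq₂ : ∀ x ∈ U,
      x * (x ^ 2 - 34 * x + 1) * deriv (deriv y₂) x + (2 * x ^ 2 - 51 * x + 1) * deriv y₂ x
        + (1 / 4) * (x - 10) * y₂ x = 0) :
    let z : ℝ → ℝ := fun x => y₁ x * y₂ x
    ∀ x ∈ U, DifferentiableAt ℝ z x ∧ DifferentiableAt ℝ (deriv z) x ∧
      DifferentiableAt ℝ (deriv (deriv z)) x ∧
      x ^ 2 * (1 - 34 * x + x ^ 2) * deriv (deriv (deriv z)) x
          + x * (3 - 153 * x + 6 * x ^ 2) * deriv (deriv z) x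
          + (1 - 112 * x + 7 * x ^ 2) * deriv z x + (x - 5) * z x = 0 := by
  intro z
  have hd₁ := key_diff U hU y₁ hy₁ heq₁
  have hd₂ := key_diff U hU y₂ hy₂ heq₂
  -- first derivative of z
  have hzdiff : ∀ t ∈ U, DifferentiableAt ℝ z t := fun t ht =>
    ((hy₁ t ht).1).mul (hy₂ t ht).1
  have hderivz : ∀ t ∈ U, deriv z t = deriv y₁ t * y₂ t + y₁ t * deriv y₂ t := fun t ht =>
    deriv_mul (hy₁ t ht).1 (hy₂ t ht).1
  set w₁ : ℝ → ℝ := fun t => deriv y₁ t * y₂ t + y₁ t * deriv y₂ t with hw₁def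
  have hw₁diff : ∀ t ∈ U, DifferentiableAt ℝ w₁ t := fun t ht =>
    ((hy₁ t ht).2.mul (hy₂ t ht).1).add ((hy₁ t ht).1.mul (hy₂ t ht).2)
  have hzw₁ : ∀ t ∈ U, deriv z =ᶠ[𝓝 t] w₁ := by
    intro t ht
    filter_upwards [hU.eventually_mem ht] with u hu
    exact hderivz u hu
  have hdz : ∀ t ∈ U, DifferentiableAt ℝ (deriv z) t := fun t ht =>
    (hw₁diff t ht).congr_of_eventuallyEq (hzw₁ t ht)
  -- second derivative of z
  set w₂ : ℝ → ℝ := fun t => deriv (deriv y₁) t * y₂ t + 2 * (deriv y₁ t * deriv y₂ t)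
    + y₁ t * deriv (deriv y₂) t with hw₂def
  have hderiv2z : ∀ t ∈ U, deriv (deriv z) t = w₂ t := by
    intro t ht
    have h1 : deriv (deriv z) t = deriv w₁ t := (hzw₁ t ht).deriv_eq
    have h2 : HasDerivAt w₁ (deriv (deriv y₁) t * y₂ t + deriv y₁ t * deriv y₂ t
        + (deriv y₁ t * deriv y₂ t + y₁ t * deriv (deriv y₂) t)) t :=
      ((hy₁ t ht).2.hasDerivAt.mul (hy₂ t ht).1.hasDerivAt).add
        ((hy₁ t ht).1.hasDerivAt.mul (hy₂ t ht).2.hasDerivAt)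
    rw [h1, h2.deriv, hw₂def]
    ring
  have hw₂diff : ∀ t ∈ U, DifferentiableAt ℝ w₂ t := fun t ht =>
    (((hd₁ t ht).mul (hy₂ t ht).1).add
      ((differentiableAt_const 2).mul ((hy₁ t ht).2.mul (hy₂ t ht).2))).add
        ((hy₁ t ht).1.mul (hd₂ t ht))
  have hzw₂ : ∀ t ∈ U, deriv (deriv z) =ᶠ[𝓝 t] w₂ := by
    intro t ht
    filter_upwards [hU.eventually_mem ht] with u hu
    exact hderiv2z u hu
  have hd2z : ∀ t ∈ U, DifferentiableAt ℝ (deriv (deriv z)) t := fun t ht =>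
    (hw₂diff t ht).congr_of_eventuallyEq (hzw₂ t ht)
  -- now the pointwise work
  intro x hx
  refine ⟨hzdiff x hx, hdz x hx, hd2z x hx, ?_⟩
  -- third derivative of z at x
  have hderiv3z : deriv (deriv (deriv z)) x =
      deriv (deriv (deriv y₁)) x * y₂ x + deriv (deriv y₁) x * deriv y₂ x
      + 2 * (deriv (deriv y₁) x * deriv y₂ x + deriv y₁ x * deriv (deriv y₂) x)
      + (deriv y₁ x * deriv (deriv y₂) x + y₁ x * deriv (deriv (deriv y₂)) x) := by
    have h1 : deriv (deriv (deriv z)) x = deriv w₂ x := (hzw₂ x hx).deriv_eq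
    have h2 : HasDerivAt w₂ (deriv (deriv (deriv y₁)) x * y₂ x + deriv (deriv y₁) x * deriv y₂ x
        + 2 * (deriv (deriv y₁) x * deriv y₂ x + deriv y₁ x * deriv (deriv y₂) x)
        + (deriv y₁ x * deriv (deriv y₂) x + y₁ x * deriv (deriv (deriv y₂)) x)) x := by
      have ha := (hd₁ x hx).hasDerivAt.mul (hy₂ x hx).1.hasDerivAt
      have hb := ((hy₁ x hx).2.hasDerivAt.mul (hy₂ x hx).2.hasDerivAt).const_mul (2:ℝ)
      have hc := (hy₁ x hx).1.hasDerivAt.mul (hd₂ x hx).hasDerivAt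
      exact (ha.add hb).add hc
    rw [h1, h2.deriv]
  -- differentiated Dwork equations
  have hE' : ∀ (y : ℝ → ℝ), (∀ t ∈ U, DifferentiableAt ℝ y t ∧ DifferentiableAt ℝ (deriv y) t) →
      (∀ t ∈ U, DifferentiableAt ℝ (deriv (deriv y)) t) →
      (∀ t ∈ U, t * (t ^ 2 - 34 * t + 1) * deriv (deriv y) t
        + (2 * t ^ 2 - 51 * t + 1) * deriv y t + (1 / 4) * (t - 10) * y t = 0) →
      (3 * x ^ 2 - 68 * x + 1) * deriv (deriv y) x
        + x * (x ^ 2 - 34 * x + 1) * deriv (deriv (deriv y)) x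
        + ((4 * x - 51) * deriv y x + (2 * x ^ 2 - 51 * x + 1) * deriv (deriv y) x)
        + ((1 / 4) * y x + (1 / 4) * (x - 10) * deriv y x) = 0 := by
    intro y hy hdy heqy
    set F : ℝ → ℝ := fun t => t * (t ^ 2 - 34 * t + 1) * deriv (deriv y) t
      + (2 * t ^ 2 - 51 * t + 1) * deriv y t + (1 / 4) * (t - 10) * y t with hFdef
    have hF0 : F =ᶠ[𝓝 x] fun _ => (0:ℝ) := by
      filter_upwards [hU.eventually_mem hx] with u hu
      exact heqy u hu
    have hFd : HasDerivAt F ((3 * x ^ 2 - 68 * x + 1) * deriv (deriv y) x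
        + x * (x ^ 2 - 34 * x + 1) * deriv (deriv (deriv y)) x
        + ((4 * x - 51) * deriv y x + (2 * x ^ 2 - 51 * x + 1) * deriv (deriv y) x)
        + ((1 / 4) * y x + (1 / 4) * (x - 10) * deriv y x)) x := by
      have ha := (hasDerivAt_P x).mul (hdy x hx).hasDerivAt
      have hb := (hasDerivAt_Q x).mul (hy x hx).2.hasDerivAt
      have hc := (hasDerivAt_R x).mul (hy x hx).1.hasDerivAt
      exact (ha.add hb).add hc
    have : deriv F x = 0 := by
      rw [hF0.deriv_eq]
      exact deriv_const x 0
    rw [← hFd.deriv]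
    exact this
  have hE₁' := hE' y₁ hy₁ hd₁ heq₁
  have hE₂' := hE' y₂ hy₂ hd₂ heq₂
  have hE₁ := heq₁ x hx
  have hE₂ := heq₂ x hx
  rw [hderiv3z, hderiv2z x hx, hderivz x hx, hw₂def]
  show x ^ 2 * (1 - 34 * x + x ^ 2) * _ + x * (3 - 153 * x + 6 * x ^ 2) *
      (deriv (deriv y₁) x * y₂ x + 2 * (deriv y₁ x * deriv y₂ x) + y₁ x * deriv (deriv y₂) x)
      + (1 - 112 * x + 7 * x ^ 2) * (deriv y₁ x * y₂ x + y₁ x * deriv y₂ x)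
      + (x - 5) * (y₁ x * y₂ x) = 0
  linear_combination (x * y₂ x) * hE₁' + (x * y₁ x) * hE₂'
    + (3 * x * deriv y₂ x + y₂ x) * hE₁ + (3 * x * deriv y₁ x + y₁ x) * hE₂
end

section
/- Let U ⊆ ℝ be an open set, let r : ℝ → ℝ be differentiable on U, and let y₁, y₂ : ℝ → ℝ be twice differentiable on U with y₁'' = r·y₁ and y₂'' = r·y₂ on U. Then z := y₁·y₂ is three times differentiable on U and satisfies z''' = 4r·z' + 2r'·z on U. -/
/-- If `y₁'' = r y₁` and `y₂'' = r y₂` on an open set `U` (with `r`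
differentiable on `U`), then `z = y₁·y₂` is three times differentiable on `U` and
solves the symmetric square equation `z''' = 4r z' + 2r' z`. -/
theorem symmetric_square_ODE (U : Set ℝ) (hU : IsOpen U) (r y₁ y₂ : ℝ → ℝ)
    (hr : ∀ x ∈ U, DifferentiableAt ℝ r x)
    (hy₁ : ∀ x ∈ U, DifferentiableAt ℝ y₁ x ∧ DifferentiableAt ℝ (deriv y₁) x)
    (hy₂ : ∀ x ∈ U, DifferentiableAt ℝ y₂ x ∧ DifferentiableAt ℝ (deriv y₂) x)
    (heq₁ : ∀ x ∈ U, deriv (deriv y₁) x = r x * y₁ x)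
    (heq₂ : ∀ x ∈ U, deriv (deriv y₂) x = r x * y₂ x) :
    let z : ℝ → ℝ := fun x => y₁ x * y₂ x
    ∀ x ∈ U, DifferentiableAt ℝ z x ∧ DifferentiableAt ℝ (deriv z) x ∧
      DifferentiableAt ℝ (deriv (deriv z)) x ∧
      deriv (deriv (deriv z)) x = 4 * r x * deriv z x + 2 * deriv r x * z x := by
  intro z
  -- z is differentiable on U
  have hzd : ∀ x ∈ U, DifferentiableAt ℝ z x := fun x hx =>
    ((hy₁ x hx).1).mul ((hy₂ x hx).1)
  -- formula for z' on U
  have hz' : ∀ x ∈ U, deriv z x = deriv y₁ x * y₂ x + y₁ x * deriv y₂ x := fun x hx =>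
    deriv_mul (hy₁ x hx).1 (hy₂ x hx).1
  have hz'e : ∀ x ∈ U, deriv z =ᶠ[nhds x]
      (fun t => deriv y₁ t * y₂ t + y₁ t * deriv y₂ t) := fun x hx =>
    Filter.eventuallyEq_of_mem (hU.mem_nhds hx) (fun t ht => hz' t ht)
  -- the RHS function is differentiable on U
  have hwd : ∀ x ∈ U, DifferentiableAt ℝ
      (fun t => deriv y₁ t * y₂ t + y₁ t * deriv y₂ t) x := fun x hx =>
    (((hy₁ x hx).2).mul (hy₂ x hx).1).add (((hy₁ x hx).1).mul (hy₂ x hx).2)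
  have hz'd : ∀ x ∈ U, DifferentiableAt ℝ (deriv z) x := fun x hx =>
    (hwd x hx).congr_of_eventuallyEq (hz'e x hx)
  -- formula for z'' on U
  have hz'' : ∀ x ∈ U, deriv (deriv z) x =
      2 * r x * (y₁ x * y₂ x) + 2 * (deriv y₁ x * deriv y₂ x) := by
    intro x hx
    rw [Filter.EventuallyEq.deriv_eq (hz'e x hx)]
    rw [deriv_fun_add (((hy₁ x hx).2).fun_mul (hy₂ x hx).1) (((hy₁ x hx).1).fun_mul (hy₂ x hx).2),
      deriv_fun_mul (hy₁ x hx).2 (hy₂ x hx).1, deriv_fun_mul (hy₁ x hx).1 (hy₂ x hx).2,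
      heq₁ x hx, heq₂ x hx]
    ring
  have hz''e : ∀ x ∈ U, deriv (deriv z) =ᶠ[nhds x]
      (fun t => 2 * r t * (y₁ t * y₂ t) + 2 * (deriv y₁ t * deriv y₂ t)) := fun x hx =>
    Filter.eventuallyEq_of_mem (hU.mem_nhds hx) (fun t ht => hz'' t ht)
  have hvd : ∀ x ∈ U, DifferentiableAt ℝ
      (fun t => 2 * r t * (y₁ t * y₂ t) + 2 * (deriv y₁ t * deriv y₂ t)) x := fun x hx =>
    (((differentiableAt_const 2).mul (hr x hx)).mul
      (((hy₁ x hx).1).mul (hy₂ x hx).1)).add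
      ((differentiableAt_const 2).mul (((hy₁ x hx).2).mul (hy₂ x hx).2))
  have hz''d : ∀ x ∈ U, DifferentiableAt ℝ (deriv (deriv z)) x := fun x hx =>
    (hvd x hx).congr_of_eventuallyEq (hz''e x hx)
  intro x hx
  refine ⟨hzd x hx, hz'd x hx, hz''d x hx, ?_⟩
  rw [Filter.EventuallyEq.deriv_eq (hz''e x hx)]
  rw [deriv_fun_add (((differentiableAt_const 2).fun_mul (hr x hx)).fun_mul
      (((hy₁ x hx).1).fun_mul (hy₂ x hx).1))
      ((differentiableAt_const 2).fun_mul (((hy₁ x hx).2).fun_mul (hy₂ x hx).2)),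
    deriv_fun_mul ((differentiableAt_const 2).fun_mul (hr x hx)) (((hy₁ x hx).1).fun_mul (hy₂ x hx).1),
    deriv_fun_mul (differentiableAt_const 2) (hr x hx),
    deriv_fun_mul (hy₁ x hx).1 (hy₂ x hx).1,
    deriv_fun_mul (differentiableAt_const 2) (((hy₁ x hx).2).fun_mul (hy₂ x hx).2),
    deriv_fun_mul (hy₁ x hx).2 (hy₂ x hx).2,
    heq₁ x hx, heq₂ x hx]
  simp only [deriv_const', z]
  ring
end

section
/- Let β : ℝ → ℝ be twice differentiable on the interval I := (0, 17 − 12√2) and satisfy, for all x ∈ I, x(x² − 34x + 1)β''(x) + (2x² − 51x + 1)β'(x) + (1/4)(x − 10)β(x) = 0. Define ν : I → ℝ by ν(x) := x^{1/2}·(x² − 34x + 1)^{1/4}·β(x) (real positive roots; note that x > 0 and x² − 34x + 1 > 0 on I). Then ν is twice differentiable on I and satisfies, for all x ∈ I, 4x²(x² − 34x + 1)²ν''(x) + (x⁴ − 44x³ + 1206x² − 44x + 1)ν(x) = 0. -/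
private lemma p_pos' {x : ℝ} (h0 : 0 < x) (h1 : x < 17 - 12 * Real.sqrt 2) :
    0 < x ^ 2 - 34 * x + 1 := by
  have hs : Real.sqrt 2 ^ 2 = 2 := Real.sq_sqrt (by norm_num)
  have hsn : 0 ≤ Real.sqrt 2 := Real.sqrt_nonneg 2
  nlinarith [mul_pos (show (0:ℝ) < 17 - 12 * Real.sqrt 2 - x by linarith)
    (show (0:ℝ) < 17 + 12 * Real.sqrt 2 - x by nlinarith)]

private noncomputable def wfun (x : ℝ) : ℝ :=
  x ^ ((1:ℝ)/2) * (x ^ 2 - 34 * x + 1) ^ ((1:ℝ)/4)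

private noncomputable def ufun (x : ℝ) : ℝ :=
  (2 * x ^ 2 - 51 * x + 1) / (2 * x * (x ^ 2 - 34 * x + 1))

private lemma hasDerivAt_wfun {x : ℝ} (hx : 0 < x) (hp : 0 < x ^ 2 - 34 * x + 1) :
    HasDerivAt wfun (wfun x * ufun x) x := by
  have h1 : HasDerivAt (fun y : ℝ => y ^ ((1:ℝ)/2)) (((1:ℝ)/2) * x ^ ((1:ℝ)/2 - 1)) x :=
    Real.hasDerivAt_rpow_const (Or.inl hx.ne')
  have h2 : HasDerivAt (fun y : ℝ => y ^ 2 - 34 * y + 1) (2 * x - 34) x := by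
    simpa using (((hasDerivAt_pow 2 x).sub ((hasDerivAt_id x).const_mul 34)).add_const 1)
  have h3 : HasDerivAt (fun y : ℝ => (y ^ 2 - 34 * y + 1) ^ ((1:ℝ)/4))
      ((2 * x - 34) * ((1:ℝ)/4) * (x ^ 2 - 34 * x + 1) ^ ((1:ℝ)/4 - 1)) x :=
    h2.rpow_const (Or.inl hp.ne')
  have h := h1.mul h3
  have e1 : x ^ ((1:ℝ)/2 - 1) = x ^ ((1:ℝ)/2) / x := by
    rw [Real.rpow_sub hx, Real.rpow_one]
  have e2 : (x ^ 2 - 34 * x + 1) ^ ((1:ℝ)/4 - 1)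
      = (x ^ 2 - 34 * x + 1) ^ ((1:ℝ)/4) / (x ^ 2 - 34 * x + 1) := by
    rw [Real.rpow_sub hp, Real.rpow_one]
  refine h.congr_deriv ?_
  unfold wfun ufun
  rw [e1, e2]
  have hxne : x ≠ 0 := hx.ne'
  generalize hq : x ^ 2 - 34 * x + 1 = q at hp ⊢
  have hq0 : q ≠ 0 := hp.ne'
  field_simp
  subst hq
  ring

private lemma hasDerivAt_ufun {x : ℝ} (hx : 0 < x) (hp : 0 < x ^ 2 - 34 * x + 1) :
    HasDerivAt ufun
      (((4 * x - 51) * (2 * x * (x ^ 2 - 34 * x + 1))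
        - (2 * x ^ 2 - 51 * x + 1) * (6 * x ^ 2 - 136 * x + 2))
        / (2 * x * (x ^ 2 - 34 * x + 1)) ^ 2) x := by
  have hN : HasDerivAt (fun y : ℝ => 2 * y ^ 2 - 51 * y + 1) (4 * x - 51) x := by
    have := (((hasDerivAt_pow 2 x).const_mul 2).sub ((hasDerivAt_id x).const_mul 51)).add_const 1
    simpa using this.congr_deriv (by ring)
  have hD : HasDerivAt (fun y : ℝ => 2 * y * (y ^ 2 - 34 * y + 1)) (6 * x ^ 2 - 136 * x + 2) x := by
    have h2 : HasDerivAt (fun y : ℝ => y ^ 2 - 34 * y + 1) (2 * x - 34) x := by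
      simpa using (((hasDerivAt_pow 2 x).sub ((hasDerivAt_id x).const_mul 34)).add_const 1)
    have h := ((hasDerivAt_id x).const_mul 2).mul h2
    simp only [id_eq] at h
    exact h.congr_deriv (by ring)
  have hD0 : 2 * x * (x ^ 2 - 34 * x + 1) ≠ 0 := by positivity
  exact hN.div hD hD0

/-- If `β` solves Dwork's equation on `I = (0, 17 − 12√2)`, then
`ν(x) = x^{1/2}(x² − 34x + 1)^{1/4}β(x)` is twice differentiable on `I` and solves
`4x²(x² − 34x + 1)²ν'' + (x⁴ − 44x³ + 1206x² − 44x + 1)ν = 0` there. -/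
theorem nu_second_order_equation (β : ℝ → ℝ)
    (hβ : ∀ x ∈ Set.Ioo (0 : ℝ) (17 - 12 * Real.sqrt 2),
      DifferentiableAt ℝ β x ∧ DifferentiableAt ℝ (deriv β) x)
    (hβeq : ∀ x ∈ Set.Ioo (0 : ℝ) (17 - 12 * Real.sqrt 2),
      x * (x ^ 2 - 34 * x + 1) * deriv (deriv β) x + (2 * x ^ 2 - 51 * x + 1) * deriv β x
        + (1 / 4) * (x - 10) * β x = 0) :
    let ν : ℝ → ℝ := fun x => x ^ ((1 : ℝ) / 2) * (x ^ 2 - 34 * x + 1) ^ ((1 : ℝ) / 4) * β x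
    ∀ x ∈ Set.Ioo (0 : ℝ) (17 - 12 * Real.sqrt 2),
      DifferentiableAt ℝ ν x ∧ DifferentiableAt ℝ (deriv ν) x ∧
      4 * x ^ 2 * (x ^ 2 - 34 * x + 1) ^ 2 * deriv (deriv ν) x
          + (x ^ 4 - 44 * x ^ 3 + 1206 * x ^ 2 - 44 * x + 1) * ν x = 0 := by
  intro ν x hx
  have hνw : ν = fun y => wfun y * β y := by
    funext y; simp [wfun, ν, mul_assoc]
  obtain ⟨hx0, hx1⟩ := hx
  have hp := p_pos' hx0 hx1
  -- first derivative on the interval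
  have hd1 : ∀ y ∈ Set.Ioo (0 : ℝ) (17 - 12 * Real.sqrt 2),
      HasDerivAt ν (wfun y * ufun y * β y + wfun y * deriv β y) y := by
    intro y hy
    have := (hasDerivAt_wfun hy.1 (p_pos' hy.1 hy.2)).mul (hβ y hy).1.hasDerivAt
    rw [hνw]; exact this
  have hmem : Set.Ioo (0 : ℝ) (17 - 12 * Real.sqrt 2) ∈ nhds x :=
    isOpen_Ioo.mem_nhds ⟨hx0, hx1⟩
  have hev : deriv ν =ᶠ[nhds x] fun y => wfun y * ufun y * β y + wfun y * deriv β y := by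
    filter_upwards [hmem] with y hy
    exact (hd1 y hy).deriv
  -- second derivative of the RHS
  have hdw := hasDerivAt_wfun hx0 hp
  have hdu := hasDerivAt_ufun hx0 hp
  have hdβ := (hβ x ⟨hx0, hx1⟩).1.hasDerivAt
  have hdβ' := (hβ x ⟨hx0, hx1⟩).2.hasDerivAt
  have hd2 : HasDerivAt (fun y => wfun y * ufun y * β y + wfun y * deriv β y)
      ((wfun x * ufun x * ufun x + wfun x *
          (((4 * x - 51) * (2 * x * (x ^ 2 - 34 * x + 1))
            - (2 * x ^ 2 - 51 * x + 1) * (6 * x ^ 2 - 136 * x + 2))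
            / (2 * x * (x ^ 2 - 34 * x + 1)) ^ 2)) * β x
        + wfun x * ufun x * deriv β x
        + (wfun x * ufun x * deriv β x + wfun x * deriv (deriv β) x)) x :=
    ((hdw.mul hdu).mul hdβ).add (hdw.mul hdβ')
  refine ⟨(hd1 x ⟨hx0, hx1⟩).differentiableAt, ?_, ?_⟩
  · exact hd2.differentiableAt.congr_of_eventuallyEq hev
  · have hkey : deriv (deriv ν) x
        = deriv (fun y => wfun y * ufun y * β y + wfun y * deriv β y) x :=
      Filter.EventuallyEq.deriv_eq hev
    rw [hd2.deriv] at hkey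
    rw [hkey, hνw]
    have hE := hβeq x ⟨hx0, hx1⟩
    have hB'' : deriv (deriv β) x =
        -((2 * x ^ 2 - 51 * x + 1) * deriv β x + (1 / 4) * (x - 10) * β x)
          / (x * (x ^ 2 - 34 * x + 1)) := by
      rw [eq_div_iff (mul_pos hx0 hp).ne']
      linear_combination hE
    rw [hB'', ufun]
    have hpne : x ^ 2 - 34 * x + 1 ≠ 0 := hp.ne'
    have hxne : x ≠ 0 := hx0.ne'
    generalize hq : x ^ 2 - 34 * x + 1 = q at hpne ⊢
    field_simp
    subst hq
    ring
end
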